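/- arXiv:2206.05170 — 7 statements merged into one kernel-verified Lean document; each statement's English description precedes it below -/
import Mathlib

section
/- Let g : ℝⁿ → ℝ be a positive definite homogeneous polynomial of even degree d (i.e., g(x) > 0 for all x ≠ 0 and g(tx) = t^d g(x) for t > 0). Then the Lebesgue volume of the sublevel set G = {x : g(x) ≤ 1} is finite and equals (1/Γ(1 + n/d)) ∫_{ℝⁿ} exp(-g(x)) dx. -/
/-!
Since `exp (-g x) = ∫_{g x}^∞ e^{-s} ds`, Tonelli gives `∫ exp (-g) = ∫_0^∞ e^{-s} vol {g ≤ s} ds`.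
Homogeneity makes `{g ≤ s} = s^{1/d} • {g ≤ 1}`, of volume `s^{n/d} vol {g ≤ 1}`, and what remains
is Euler's integral `∫_0^∞ e^{-s} s^{n/d} ds = Γ(1 + n/d)`. The volume is finite because `g` has a
positive minimum `m` on the unit sphere, so `{g ≤ 1}` lies in the ball of radius `m^{-1/d}`.
-/

open MeasureTheory MvPolynomial Set Module Pointwise

theorem MvPolynomial.IsHomogeneous.eval_smul {σ R : Type*} [CommSemiring R]
    {φ : MvPolynomial σ R} {n : ℕ} (hφ : φ.IsHomogeneous n) (c : R) (x : σ → R) :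
    eval (c • x) φ = c ^ n * eval x φ := by
  rw [eval_eq, eval_eq, Finset.mul_sum]
  refine Finset.sum_congr rfl fun s hs => ?_
  simp only [Pi.smul_apply, smul_eq_mul, mul_pow, Finset.prod_mul_distrib,
    Finset.prod_pow_eq_pow_sum, ← hφ.degree_eq_sum_deg_support hs]
  ring

theorem lintegral_exp_neg_eq_lintegral_measure_le {α : Type*} [MeasurableSpace α]
    (μ : Measure α) [SFinite μ] {f : α → ℝ} (hf : Measurable f) :
    ∫⁻ x, ENNReal.ofReal (Real.exp (-f x)) ∂μ
      = ∫⁻ s, ENNReal.ofReal (Real.exp (-s)) * μ {x | f x ≤ s} := by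
  have hexp_eq_tail : ∀ a : ℝ, ENNReal.ofReal (Real.exp (-a))
      = ∫⁻ s, (Ici a).indicator (fun s => ENNReal.ofReal (Real.exp (-s))) s := by
    intro a
    rw [lintegral_indicator measurableSet_Ici, setLIntegral_congr Ioi_ae_eq_Ici.symm,
      ← ofReal_integral_eq_lintegral_ofReal (integrableOn_exp_neg_Ioi a)
        (Filter.Eventually.of_forall fun s => (Real.exp_pos _).le), integral_exp_neg_Ioi]
  have hmeas : Measurable (Function.uncurry fun x s => (Ici (f x)).indicator
      (fun s => ENNReal.ofReal (Real.exp (-s))) s) :=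
    (by fun_prop : Measurable fun p : α × ℝ => ENNReal.ofReal (Real.exp (-p.2))).indicator
      (measurableSet_le (hf.comp measurable_fst) measurable_snd)
  calc ∫⁻ x, ENNReal.ofReal (Real.exp (-f x)) ∂μ
      = ∫⁻ x, (∫⁻ s, (Ici (f x)).indicator (fun s => ENNReal.ofReal (Real.exp (-s))) s) ∂μ :=
        lintegral_congr fun x => hexp_eq_tail (f x)
    _ = ∫⁻ (s : ℝ), ∫⁻ x,
          {x | f x ≤ s}.indicator (fun _ => ENNReal.ofReal (Real.exp (-s))) x ∂μ := by
        -- both integrands unfold to `if f x ≤ s then ENNReal.ofReal (exp (-s)) else 0`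
        rw [lintegral_lintegral_swap hmeas.aemeasurable]
        rfl
    _ = _ := lintegral_congr fun s => lintegral_indicator_const (hf measurableSet_Iic) _

theorem lintegral_Ioi_exp_neg_mul_rpow {p : ℝ} (hp : -1 < p) :
    ∫⁻ s in Ioi 0, ENNReal.ofReal (Real.exp (-s) * s ^ p)
      = ENNReal.ofReal (Real.Gamma (p + 1)) := by
  have hint : IntegrableOn (fun s : ℝ => Real.exp (-s) * s ^ p) (Ioi 0) := by
    simpa using Real.GammaIntegral_convergent (s := p + 1) (by linarith)
  rw [← ofReal_integral_eq_lintegral_ofReal hint ?_, Real.Gamma_eq_integral (by linarith),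
    add_sub_cancel_right]
  filter_upwards [ae_restrict_mem measurableSet_Ioi] with s hs
  exact mul_nonneg (Real.exp_pos _).le (Real.rpow_nonneg (le_of_lt hs) _)

variable {E : Type*} [NormedAddCommGroup E] [NormedSpace ℝ E] [FiniteDimensional ℝ E]

theorem isBounded_setOf_le_one_of_homogeneous {f : E → ℝ} {d : ℝ} (hcont : Continuous f)
    (hpos : ∀ x, x ≠ 0 → 0 < f x) (hd : 0 < d)
    (hf : ∀ c : ℝ, 0 < c → ∀ x, f (c • x) = c ^ d * f x) :
    Bornology.IsBounded {x | f x ≤ 1} := by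
  obtain hE | hE := subsingleton_or_nontrivial E
  · exact (Set.toFinite _).isBounded
  obtain ⟨z, hz, hmin⟩ := (isCompact_sphere (0 : E) 1).exists_isMinOn
    (NormedSpace.sphere_nonempty.mpr zero_le_one) hcont.continuousOn
  have hm : 0 < f z := hpos z (ne_zero_of_mem_unit_sphere ⟨z, hz⟩)
  refine (Metric.isBounded_closedBall (x := 0) (r := (f z)⁻¹ ^ d⁻¹)).subset fun x hx => ?_
  rw [Metric.mem_closedBall, dist_zero_right]
  rcases eq_or_ne x 0 with rfl | hx0
  · rw [norm_zero]; exact (Real.rpow_pos_of_pos (inv_pos.2 hm) _).le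
  have hxn : 0 < ‖x‖ := norm_pos_iff.2 hx0
  have hunit : ‖x‖⁻¹ • x ∈ Metric.sphere (0 : E) 1 := by
    simp [norm_smul, hxn.ne']
  have hfx : f x = ‖x‖ ^ d * f (‖x‖⁻¹ • x) := by
    rw [← hf _ hxn, smul_inv_smul₀ hxn.ne']
  rw [Real.le_rpow_inv_iff_of_pos hxn.le (inv_nonneg.2 hm.le) hd, ← one_div, le_div_iff₀ hm]
  calc ‖x‖ ^ d * f z ≤ ‖x‖ ^ d * f (‖x‖⁻¹ • x) := by gcongr; exact hmin hunit
    _ = f x := hfx.symm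
    _ ≤ 1 := hx

variable [MeasurableSpace E] [BorelSpace E] (μ : Measure E) [μ.IsAddHaarMeasure]

theorem addHaar_setOf_le_of_homogeneous {f : E → ℝ} {d : ℝ} (hd : 0 < d)
    (hf : ∀ c : ℝ, 0 < c → ∀ x, f (c • x) = c ^ d * f x) {s : ℝ} (hs : 0 < s) :
    μ {x | f x ≤ s} = ENNReal.ofReal (s ^ (finrank ℝ E / d)) * μ {x | f x ≤ 1} := by
  set c := s ^ d⁻¹
  have hc : 0 < c := Real.rpow_pos_of_pos hs _
  have hcd : c ^ d = s := Real.rpow_inv_rpow hs.le hd.ne'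
  have hset : {x | f x ≤ s} = c • {x | f x ≤ 1} := by
    ext x
    rw [Set.mem_smul_set_iff_inv_smul_mem₀ hc.ne', mem_ofPred_eq, mem_ofPred_eq,
      hf _ (inv_pos.2 hc), Real.inv_rpow hc.le, hcd, inv_mul_le_iff₀ hs, mul_one]
  rw [hset, Measure.addHaar_smul_of_nonneg μ hc.le, ← Real.rpow_natCast, ← Real.rpow_mul hs.le,
    inv_mul_eq_div]

theorem lintegral_exp_neg_of_homogeneous {f : E → ℝ} {d : ℝ} (hmeas : Measurable f)
    (hnonneg : ∀ x, 0 ≤ f x) (hd : 0 < d)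
    (hf : ∀ c : ℝ, 0 < c → ∀ x, f (c • x) = c ^ d * f x) :
    ∫⁻ x, ENNReal.ofReal (Real.exp (-f x)) ∂μ
      = ENNReal.ofReal (Real.Gamma (finrank ℝ E / d + 1)) * μ {x | f x ≤ 1} := by
  have hsupp : (fun s => ENNReal.ofReal (Real.exp (-s)) * μ {x | f x ≤ s}).support ⊆ Ici 0 := by
    intro s hs
    by_contra hneg
    have hempty : {x | f x ≤ s} = ∅ :=
      eq_empty_of_forall_notMem fun x hx => hneg ((hnonneg x).trans hx)
    simp [hempty] at hs
  calc ∫⁻ x, ENNReal.ofReal (Real.exp (-f x)) ∂μ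
      = ∫⁻ s, ENNReal.ofReal (Real.exp (-s)) * μ {x | f x ≤ s} :=
        lintegral_exp_neg_eq_lintegral_measure_le μ hmeas
    _ = ∫⁻ s in Ioi 0, ENNReal.ofReal (Real.exp (-s)) * μ {x | f x ≤ s} := by
        rw [setLIntegral_congr Ioi_ae_eq_Ici, setLIntegral_eq_of_support_subset hsupp]
    _ = ∫⁻ s in Ioi 0,
          ENNReal.ofReal (Real.exp (-s) * s ^ (finrank ℝ E / d)) * μ {x | f x ≤ 1} :=
        setLIntegral_congr_fun measurableSet_Ioi fun s hs => by
          rw [addHaar_setOf_le_of_homogeneous μ hd hf hs, ENNReal.ofReal_mul (Real.exp_pos _).le,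
            mul_assoc]
    _ = ENNReal.ofReal (Real.Gamma (finrank ℝ E / d + 1)) * μ {x | f x ≤ 1} := by
        rw [lintegral_mul_const _ (by fun_prop), lintegral_Ioi_exp_neg_mul_rpow (by
          have : (0 : ℝ) ≤ finrank ℝ E / d := by positivity
          linarith)]

theorem stmt0_general (n d : ℕ) (hd : 2 ≤ d)
    (g : MvPolynomial (Fin n) ℝ) (hg : g.IsHomogeneous d)
    (hpos : ∀ x : Fin n → ℝ, x ≠ 0 → 0 < eval x g) :
    volume {x : Fin n → ℝ | eval x g ≤ 1} ≠ ⊤ ∧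
    (volume {x : Fin n → ℝ | eval x g ≤ 1}).toReal
      = (1 / Real.Gamma (1 + (n : ℝ) / d)) *
          ∫ x : Fin n → ℝ, Real.exp (-(eval x g)) := by
  have hd₀ : (0 : ℝ) < d := by exact_mod_cast (show 0 < d by omega)
  have hhom : ∀ c : ℝ, 0 < c → ∀ x : Fin n → ℝ, eval (c • x) g = c ^ (d : ℝ) * eval x g :=
    fun c _ x => by rw [Real.rpow_natCast, hg.eval_smul]
  have hzero : eval 0 g = 0 := by
    simpa [zero_pow (show d ≠ 0 by omega)] using hg.eval_smul 0 0
  have hnonneg : ∀ x : Fin n → ℝ, 0 ≤ eval x g := fun x => by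
    rcases eq_or_ne x 0 with rfl | hx
    exacts [hzero.ge, (hpos x hx).le]
  have hfin : volume {x : Fin n → ℝ | eval x g ≤ 1} ≠ ⊤ :=
    (isBounded_setOf_le_one_of_homogeneous (continuous_eval g) hpos hd₀ hhom).measure_lt_top.ne
  have hlint := lintegral_exp_neg_of_homogeneous volume (continuous_eval g).measurable
    hnonneg hd₀ hhom
  rw [Module.finrank_fin_fun] at hlint
  refine ⟨hfin, ?_⟩
  rw [integral_eq_lintegral_of_nonneg_ae (f := fun x => Real.exp (-eval x g))
      (Filter.Eventually.of_forall fun x => (Real.exp_pos _).le)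
      (continuous_eval g).neg.rexp.aestronglyMeasurable,
    hlint, ENNReal.toReal_mul, ENNReal.toReal_ofReal (by positivity), add_comm]
  field_simp

theorem stmt0 (n d : ℕ) (hn : 1 ≤ n) (hd : 2 ≤ d) (hde : Even d)
    (g : MvPolynomial (Fin n) ℝ) (hg : g.IsHomogeneous d)
    (hpos : ∀ x : Fin n → ℝ, x ≠ 0 → 0 < eval x g) :
    volume {x : Fin n → ℝ | eval x g ≤ 1} ≠ ⊤ ∧
    (volume {x : Fin n → ℝ | eval x g ≤ 1}).toReal
      = (1 / Real.Gamma (1 + (n : ℝ) / d)) *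
          ∫ x : Fin n → ℝ, Real.exp (-(eval x g)) :=
  stmt0_general n d hd g hg hpos
end

section
/- Let g : ℝⁿ → ℝ be a continuous positively homogeneous function of degree d with g(x) > 0 for x ≠ 0, and let h : ℝⁿ → ℝ be a continuous non-negative positively homogeneous function of degree e ≥ 0. Then ∫_{{g ≤ 1}} h(x) dx = (1/Γ(1 + (n+e)/d)) ∫_{ℝⁿ} h(x) exp(-g(x)) dx, and both integrals are finite. -/
/-! The identity comes from writing `exp (-g x) = ∫_{s ≥ g x} e^{-s} ds` and swapping the
integrals (Tonelli): `∫ h e^{-g} = ∫_0^∞ e^{-s} (∫_{g ≤ s} h) ds`. Substituting `x = s^{1/d} y`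
gives `∫_{g ≤ s} h = s^{(n+e)/d} ∫_{g ≤ 1} h`, and what remains is the integral defining
`Γ(1 + (n+e)/d)`. Finiteness holds because `g x ≥ m ‖x‖^d`, where `m > 0` is the minimum of `g`
on the unit sphere, so `{g ≤ 1}` is compact. -/

open MeasureTheory Set Module Real
open scoped ENNReal

def PosHomogeneous {E : Type*} [SMul ℝ E] (f : E → ℝ) (d : ℝ) : Prop :=
  ∀ t : ℝ, 0 < t → ∀ x, f (t • x) = t ^ d * f x

theorem lintegral_eq_mul_lintegral_comp_smul {E : Type*} [NormedAddCommGroup E]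
    [NormedSpace ℝ E] [FiniteDimensional ℝ E] [MeasurableSpace E] [BorelSpace E]
    (μ : Measure E) [μ.IsAddHaarMeasure] (f : E → ℝ≥0∞) {R : ℝ} (hR : 0 < R) :
    ∫⁻ x, f x ∂μ = ENNReal.ofReal (R ^ finrank ℝ E) * ∫⁻ x, f (R • x) ∂μ := by
  have hRn : 0 < R ^ finrank ℝ E := by positivity
  have hmap : ∫⁻ x, f (R • x) ∂μ = ∫⁻ x, f x ∂(Measure.map (R • ·) μ) :=
    (lintegral_map_equiv f (Homeomorph.smulOfNeZero R hR.ne').toMeasurableEquiv).symm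
  rw [hmap, Measure.map_addHaar_smul μ hR.ne', lintegral_smul_measure, smul_eq_mul, ← mul_assoc,
    abs_of_pos (inv_pos.2 hRn), ← ENNReal.ofReal_mul hRn.le, mul_inv_cancel₀ hRn.ne',
    ENNReal.ofReal_one, one_mul]

theorem lintegral_Ici_exp_neg (a : ℝ) :
    ∫⁻ s in Ici a, ENNReal.ofReal (exp (-s)) = ENNReal.ofReal (exp (-a)) := by
  have hint : IntegrableOn (fun s => exp (-s)) (Ioi a) := by
    simpa using exp_neg_integrableOn_Ioi a one_pos
  rw [← setLIntegral_congr Ioi_ae_eq_Ici, ← integral_exp_neg_Ioi,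
    ofReal_integral_eq_lintegral_ofReal hint (.of_forall fun s => (exp_pos _).le)]

theorem Real.ofReal_Gamma_eq_lintegral {s : ℝ} (hs : 0 < s) :
    ENNReal.ofReal (Gamma s) = ∫⁻ x in Ioi 0, ENNReal.ofReal (exp (-x) * x ^ (s - 1)) := by
  rw [Gamma_eq_integral hs, ofReal_integral_eq_lintegral_ofReal (GammaIntegral_convergent hs)]
  filter_upwards [ae_restrict_mem measurableSet_Ioi] with x hx
  have : 0 < x := hx
  positivity

namespace PosHomogeneous

variable {E : Type*} [NormedAddCommGroup E] [NormedSpace ℝ E] {g h : E → ℝ} {d e : ℝ}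

theorem map_zero (hg : PosHomogeneous g d) (hd : 0 < d) : g 0 = 0 := by
  have h2 : g 0 = 2 ^ d * g 0 := by simpa using hg 2 two_pos 0
  have : (1 : ℝ) < 2 ^ d := one_lt_rpow one_lt_two hd
  nlinarith

theorem nonneg (hg : PosHomogeneous g d) (hd : 0 < d) (hpos : ∀ x, x ≠ 0 → 0 < g x) (x : E) :
    0 ≤ g x := by
  rcases eq_or_ne x 0 with rfl | hx
  · rw [hg.map_zero hd]
  · exact (hpos x hx).le

theorem exists_pos_mul_rpow_norm_le [FiniteDimensional ℝ E] (hg : PosHomogeneous g d)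
    (hgc : Continuous g) (hpos : ∀ x, x ≠ 0 → 0 < g x) (hd : 0 < d) :
    ∃ m > 0, ∀ x, m * ‖x‖ ^ d ≤ g x := by
  obtain ⟨m, hm, hmin⟩ := (isCompact_sphere (0 : E) 1).exists_forall_le' hgc.continuousOn
    fun x hx => hpos x (ne_zero_of_mem_unit_sphere ⟨x, hx⟩)
  refine ⟨m, hm, fun x => ?_⟩
  rcases eq_or_ne x 0 with rfl | hx
  · simp [hg.map_zero hd, zero_rpow hd.ne']
  · have hr : 0 < ‖x‖ := norm_pos_iff.2 hx
    have hgx : g x = ‖x‖ ^ d * g (‖x‖⁻¹ • x) := by rw [← hg _ hr, smul_inv_smul₀ hr.ne']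
    rw [hgx, mul_comm m]
    exact mul_le_mul_of_nonneg_left (hmin _ (by simp [norm_smul, hr.ne'])) (by positivity)

theorem isCompact_setOf_le [FiniteDimensional ℝ E] (hg : PosHomogeneous g d)
    (hgc : Continuous g) (hpos : ∀ x, x ≠ 0 → 0 < g x) (hd : 0 < d) (s : ℝ) :
    IsCompact {x | g x ≤ s} := by
  obtain ⟨m, hm, hle⟩ := hg.exists_pos_mul_rpow_norm_le hgc hpos hd
  refine Metric.isCompact_of_isClosed_isBounded (isClosed_le hgc continuous_const)
    ((Metric.isBounded_closedBall (x := (0 : E)) (r := (s / m) ^ d⁻¹)).subset fun x hx => ?_)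
  have hx' : m * ‖x‖ ^ d ≤ s := (hle x).trans hx
  rw [mem_closedBall_zero_iff, le_rpow_inv_iff_of_pos (norm_nonneg _) ?_ hd, le_div_iff₀' hm]
  · exact hx'
  · exact div_nonneg ((by positivity : 0 ≤ m * ‖x‖ ^ d).trans hx') hm.le

variable [FiniteDimensional ℝ E] [MeasurableSpace E] [BorelSpace E]
  (μ : Measure E) [μ.IsAddHaarMeasure]

theorem setLIntegral_setOf_le (hg : PosHomogeneous g d) (hgm : Measurable g)
    (hh : PosHomogeneous h e) (hd : 0 < d) {s : ℝ} (hs : 0 < s) :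
    ∫⁻ x in {x | g x ≤ s}, ENNReal.ofReal (h x) ∂μ =
      ENNReal.ofReal (s ^ ((finrank ℝ E + e) / d)) *
        ∫⁻ x in {x | g x ≤ 1}, ENNReal.ofReal (h x) ∂μ := by
  set c := s ^ d⁻¹
  have hc : 0 < c := by positivity
  have hmem : ∀ x, g (c • x) ≤ s ↔ g x ≤ 1 := fun x => by
    rw [hg c hc, rpow_inv_rpow hs.le hd.ne', mul_le_iff_le_one_right hs]
  have hscale : ∀ x, {x | g x ≤ s}.indicator (fun x => ENNReal.ofReal (h x)) (c • x) =
      ENNReal.ofReal (c ^ e) * {x | g x ≤ 1}.indicator (fun x => ENNReal.ofReal (h x)) x := by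
    intro x
    simp only [indicator_apply, mem_ofPred_eq, hmem, hh c hc x,
      ENNReal.ofReal_mul (rpow_nonneg hc.le e)]
    split_ifs <;> simp
  rw [← lintegral_indicator (measurableSet_le hgm measurable_const),
    lintegral_eq_mul_lintegral_comp_smul μ _ hc, funext hscale,
    lintegral_const_mul' _ _ ENNReal.ofReal_ne_top,
    lintegral_indicator (measurableSet_le hgm measurable_const), ← mul_assoc,
    ← ENNReal.ofReal_mul (by positivity), ← rpow_natCast, ← rpow_add hc, ← rpow_mul hs.le,
    inv_mul_eq_div]

theorem lintegral_mul_exp_neg (hg : PosHomogeneous g d) (hgm : Measurable g) (hg0 : ∀ x, 0 ≤ g x)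
    (hh : PosHomogeneous h e) (hhm : Measurable h) (hd : 0 < d) (he : 0 ≤ e) :
    ∫⁻ x, ENNReal.ofReal (h x * exp (-g x)) ∂μ =
      ENNReal.ofReal (Gamma (1 + (finrank ℝ E + e) / d)) *
        ∫⁻ x in {x | g x ≤ 1}, ENNReal.ofReal (h x) ∂μ := by
  set p := (finrank ℝ E + e) / d
  set I := ∫⁻ x in {x | g x ≤ 1}, ENNReal.ofReal (h x) ∂μ
  set F : E × ℝ → ℝ≥0∞ := {q | g q.1 ≤ q.2}.indicator
    fun q => ENNReal.ofReal (h q.1) * ENNReal.ofReal (exp (-q.2))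
  have hF : Measurable F :=
    Measurable.indicator (by fun_prop) (measurableSet_le (hgm.comp measurable_fst) measurable_snd)
  have hFx : ∀ x, ∫⁻ s in Ici 0, F (x, s) = ENNReal.ofReal (h x * exp (-g x)) := by
    intro x
    change ∫⁻ s in Ici 0, (Ici (g x)).indicator
      (fun s => ENNReal.ofReal (h x) * ENNReal.ofReal (exp (-s))) s = _
    rw [lintegral_indicator measurableSet_Ici, Measure.restrict_restrict measurableSet_Ici,
      Ici_inter_Ici, max_eq_left (hg0 x), lintegral_const_mul' _ _ ENNReal.ofReal_ne_top,
      lintegral_Ici_exp_neg, ENNReal.ofReal_mul' (exp_pos _).le]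
  have hFs : ∀ s ∈ Ioi (0 : ℝ), ∫⁻ x, F (x, s) ∂μ = ENNReal.ofReal (exp (-s) * s ^ p) * I := by
    intro s hs
    change ∫⁻ x, {x | g x ≤ s}.indicator
      (fun x => ENNReal.ofReal (h x) * ENNReal.ofReal (exp (-s))) x ∂μ = _
    rw [lintegral_indicator (measurableSet_le hgm measurable_const),
      lintegral_mul_const' _ _ ENNReal.ofReal_ne_top, setLIntegral_setOf_le μ hg hgm hh hd hs,
      ENNReal.ofReal_mul (exp_pos _).le]
    ring
  have hp : 0 < 1 + p := by positivity
  calc ∫⁻ x, ENNReal.ofReal (h x * exp (-g x)) ∂μ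
      = ∫⁻ x, (∫⁻ s in Ici 0, F (x, s)) ∂μ := lintegral_congr fun x => (hFx x).symm
    _ = ∫⁻ s in Ici 0, ∫⁻ x, F (x, s) ∂μ := lintegral_lintegral_swap hF.aemeasurable
    _ = ∫⁻ s in Ioi 0, ENNReal.ofReal (exp (-s) * s ^ p) * I := by
      rw [← setLIntegral_congr Ioi_ae_eq_Ici]
      exact setLIntegral_congr_fun measurableSet_Ioi hFs
    _ = ENNReal.ofReal (Gamma (1 + p)) * I := by
      rw [lintegral_mul_const _ (by fun_prop), ofReal_Gamma_eq_lintegral hp, add_sub_cancel_left]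

end PosHomogeneous

theorem stmt1_general (n : ℕ) (d e : ℝ) (hd : 0 < d) (he : 0 ≤ e)
    (g h : (Fin n → ℝ) → ℝ) (hgc : Continuous g) (hhc : Continuous h)
    (hgpos : ∀ x, x ≠ 0 → 0 < g x)
    (hhnn : ∀ x, 0 ≤ h x)
    (hghom : ∀ t : ℝ, 0 < t → ∀ x, g (t • x) = t ^ d * g x)
    (hhhom : ∀ t : ℝ, 0 < t → ∀ x, h (t • x) = t ^ e * h x) :
    IntegrableOn h {x | g x ≤ 1} volume ∧
    Integrable (fun x => h x * Real.exp (-(g x))) volume ∧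
    ∫ x in {x | g x ≤ 1}, h x
      = (1 / Real.Gamma (1 + ((n : ℝ) + e) / d)) *
          ∫ x, h x * Real.exp (-(g x)) := by
  have hg : PosHomogeneous g d := hghom
  have hsub : IntegrableOn h {x | g x ≤ 1} :=
    hhc.continuousOn.integrableOn_compact (hg.isCompact_setOf_le hgc hgpos hd 1)
  have key := hg.lintegral_mul_exp_neg volume hgc.measurable (hg.nonneg hd hgpos)
    hhhom hhc.measurable hd he
  rw [finrank_fin_fun] at key
  have hΓ : 0 < Gamma (1 + ((n : ℝ) + e) / d) := Gamma_pos_of_pos (by positivity)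
  have hnn : 0 ≤ᵐ[volume] fun x => h x * exp (-g x) :=
    .of_forall fun x => mul_nonneg (hhnn x) (exp_pos _).le
  have hmeas : AEStronglyMeasurable (fun x => h x * exp (-g x)) := by fun_prop
  have hint : Integrable (fun x => h x * exp (-g x)) := by
    refine ⟨hmeas, ?_⟩
    rw [hasFiniteIntegral_iff_ofReal hnn, key]
    exact ENNReal.mul_lt_top ENNReal.ofReal_lt_top hsub.lintegral_lt_top
  refine ⟨hsub, hint, ?_⟩
  rw [integral_eq_lintegral_of_nonneg_ae hnn hmeas, key, ENNReal.toReal_mul,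
    ENNReal.toReal_ofReal hΓ.le, integral_eq_lintegral_of_nonneg_ae (.of_forall hhnn)
      hhc.aestronglyMeasurable]
  field_simp

theorem stmt1 (n : ℕ) (hn : 1 ≤ n) (d e : ℝ) (hd : 0 < d) (he : 0 ≤ e)
    (g h : (Fin n → ℝ) → ℝ) (hgc : Continuous g) (hhc : Continuous h)
    (hgpos : ∀ x, x ≠ 0 → 0 < g x)
    (hhnn : ∀ x, 0 ≤ h x)
    (hghom : ∀ t : ℝ, 0 < t → ∀ x, g (t • x) = t ^ d * g x)
    (hhhom : ∀ t : ℝ, 0 < t → ∀ x, h (t • x) = t ^ e * h x) :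
    IntegrableOn h {x | g x ≤ 1} volume ∧
    Integrable (fun x => h x * Real.exp (-(g x))) volume ∧
    ∫ x in {x | g x ≤ 1}, h x
      = (1 / Real.Gamma (1 + ((n : ℝ) + e) / d)) *
          ∫ x, h x * Real.exp (-(g x)) :=
  stmt1_general n d e hd he g h hgc hhc hgpos hhnn hghom hhhom
end

section
/- Let Q be a symmetric positive definite n×n real matrix and d ≥ 2 even. Then ∫_{ℝⁿ} exp(-k(yᵀQy)^{d/2}) dy = vol(S^{n-1}) · Γ((n+d)/d) / (k^{n/d} · n · √det(Q)), where vol(S^{n-1}) = 2π^{n/2}/Γ(n/2) and k > 0 is any constant. -/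
/-!
Writing `Q = Bᵀ B`, the quadratic form `yᵀ Q y` is `‖B y‖²`, so the linear substitution `x = B y`
reduces the integral to `|det B|⁻¹ = (det Q)^{-1/2}` times the radial integral
`∫ exp (-k ‖x‖^d)` over Euclidean space. Rescaling `x` by `k^{1/d}` removes `k`, and the
remaining integral `∫ exp (-‖x‖^p)` is (volume of the unit ball) `· Γ(n/p + 1)`; finally
`n · vol(ball) = vol(S^{n-1})`.
-/

open MeasureTheory Matrix

open Module in
theorem integral_exp_neg_mul_norm_rpow {E : Type*} [NormedAddCommGroup E] [NormedSpace ℝ E]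
    [FiniteDimensional ℝ E] [MeasurableSpace E] [BorelSpace E] (μ : Measure E)
    [μ.IsAddHaarMeasure] {p k : ℝ} (hp : 0 < p) (hk : 0 < k) :
    ∫ x, Real.exp (-(k * ‖x‖ ^ p)) ∂μ
      = μ.real (Metric.ball 0 1) * Real.Gamma (finrank ℝ E / p + 1) / k ^ (finrank ℝ E / p) := by
  have hunit : ∫ x, Real.exp (-‖x‖ ^ p) ∂μ
      = μ.real (Metric.ball 0 1) * Real.Gamma (finrank ℝ E / p + 1) := by
    have hΓ : 0 < Real.Gamma (finrank ℝ E / p + 1) := Real.Gamma_pos_of_pos (by positivity)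
    rw [measureReal_def, measure_unitBall_eq_integral_div_gamma μ hp,
      ENNReal.toReal_ofReal (div_nonneg (integral_nonneg fun _ => (Real.exp_pos _).le) hΓ.le),
      div_mul_cancel₀ _ hΓ.ne']
  have hscale : ∀ x : E, k * ‖x‖ ^ p = ‖k ^ p⁻¹ • x‖ ^ p := fun x => by
    rw [norm_smul, Real.norm_of_nonneg (by positivity), Real.mul_rpow (by positivity)
      (norm_nonneg _), ← Real.rpow_mul hk.le, inv_mul_cancel₀ hp.ne', Real.rpow_one]
  simp_rw [hscale]
  rw [Measure.integral_comp_smul μ (fun x => Real.exp (-‖x‖ ^ p)), hunit, smul_eq_mul,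
    ← Real.rpow_natCast, ← Real.rpow_mul hk.le, abs_inv, abs_of_pos (by positivity),
    inv_mul_eq_div, inv_mul_eq_div]

theorem EuclideanSpace.integral_exp_neg_mul_norm_rpow {ι : Type*} [Fintype ι] [Nonempty ι]
    {p k : ℝ} (hp : 0 < p) (hk : 0 < k) :
    ∫ x : EuclideanSpace ℝ ι, Real.exp (-(k * ‖x‖ ^ p))
      = (2 * Real.pi ^ ((Fintype.card ι : ℝ) / 2) / Real.Gamma ((Fintype.card ι : ℝ) / 2)) *
          Real.Gamma ((Fintype.card ι + p) / p) /
          (k ^ ((Fintype.card ι : ℝ) / p) * Fintype.card ι) := by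
  set n : ℝ := (Fintype.card ι : ℝ) with hn_def
  have hn : 0 < n := by positivity
  rw [_root_.integral_exp_neg_mul_norm_rpow volume hp hk, finrank_euclideanSpace, measureReal_def,
    EuclideanSpace.volume_ball, ENNReal.ofReal_one, one_pow, one_mul,
    ENNReal.toReal_ofReal (by positivity), ← hn_def, add_div, div_self hp.ne',
    Real.Gamma_add_one (by positivity : n / 2 ≠ 0), Real.sqrt_eq_rpow, ← Real.rpow_natCast,
    ← Real.rpow_mul Real.pi_pos.le, ← hn_def]
  field_simp

theorem integral_comp_dotProduct_self {ι F : Type*} [Fintype ι] [NormedAddCommGroup F]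
    [NormedSpace ℝ F] (g : ℝ → F) :
    ∫ x : ι → ℝ, g (x ⬝ᵥ x) = ∫ x : EuclideanSpace ℝ ι, g (‖x‖ ^ 2) := by
  rw [← (PiLp.volume_preserving_toLp ι).integral_comp
    (MeasurableEquiv.toLp 2 _).measurableEmbedding]
  congr 1 with x
  rw [EuclideanSpace.norm_sq_eq]
  simp [dotProduct, sq]

namespace Matrix

variable {ι : Type*} [Fintype ι]

theorem integral_comp_mulVec {F : Type*} [DecidableEq ι] [NormedAddCommGroup F]
    [NormedSpace ℝ F] {M : Matrix ι ι ℝ} (hM : M.det ≠ 0) (g : (ι → ℝ) → F) :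
    ∫ y, g (M *ᵥ y) = |M.det|⁻¹ • ∫ x, g x := by
  have hemb : MeasurableEmbedding (toLin' M) :=
    (LinearMap.isClosedEmbedding_of_injective (LinearMap.ker_eq_bot.mpr
      (mulVec_injective_iff_isUnit.mpr ((isUnit_iff_isUnit_det M).mpr hM.isUnit)))).measurableEmbedding
  change ∫ y, g (toLin' M y) = _
  rw [← hemb.integral_map, Real.map_matrix_volume_pi_eq_smul_volume_pi hM, integral_smul_measure,
    ENNReal.toReal_ofReal (by positivity), abs_inv]

theorem dotProduct_mulVec_transpose_mul_self (B : Matrix ι ι ℝ) (y : ι → ℝ) :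
    y ⬝ᵥ (Bᵀ * B) *ᵥ y = B *ᵥ y ⬝ᵥ B *ᵥ y := by
  rw [← mulVec_mulVec, dotProduct_mulVec, vecMul_transpose]

theorem sqrt_det_transpose_mul_self [DecidableEq ι] (B : Matrix ι ι ℝ) :
    √(Bᵀ * B).det = |B.det| := by
  rw [det_mul, det_transpose, Real.sqrt_mul_self_eq_abs]

theorem PosDef.exists_eq_transpose_mul_self {Q : Matrix ι ι ℝ} (hQ : Q.PosDef) :
    ∃ B : Matrix ι ι ℝ, Q = Bᵀ * B := by
  classical
  open MatrixOrder in
  simpa [star_eq_conjTranspose] using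
    CStarAlgebra.nonneg_iff_eq_star_mul_self.mp hQ.posSemidef.nonneg

end Matrix

theorem stmt7 (n d : ℕ) (hn : 1 ≤ n) (hd : 2 ≤ d) (hde : Even d)
    (Q : Matrix (Fin n) (Fin n) ℝ) (hQ : Q.PosDef) (k : ℝ) (hk : 0 < k) :
    ∫ y : Fin n → ℝ, Real.exp (-(k * (y ⬝ᵥ (Q *ᵥ y)) ^ (d / 2)))
      = (2 * Real.pi ^ ((n : ℝ) / 2) / Real.Gamma ((n : ℝ) / 2)) *
          Real.Gamma (((n : ℝ) + d) / d) /
          (k ^ ((n : ℝ) / d) * n * Real.sqrt Q.det) := by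
  obtain ⟨m, rfl⟩ := hde
  obtain ⟨B, rfl⟩ := hQ.exists_eq_transpose_mul_self
  have hB : B.det ≠ 0 := by
    have := hQ.det_pos
    rw [det_mul, det_transpose] at this
    exact left_ne_zero_of_mul this.ne'
  have : Nonempty (Fin n) := ⟨⟨0, hn⟩⟩
  have hp : (0 : ℝ) < (m + m : ℕ) := by norm_cast; omega
  calc ∫ y : Fin n → ℝ, Real.exp (-(k * (y ⬝ᵥ (Bᵀ * B) *ᵥ y) ^ ((m + m) / 2)))
      = ∫ y : Fin n → ℝ, (fun x => Real.exp (-(k * (x ⬝ᵥ x) ^ m))) (B *ᵥ y) := by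
        simp_rw [dotProduct_mulVec_transpose_mul_self, ← two_mul,
          Nat.mul_div_cancel_left m two_pos]
    _ = |B.det|⁻¹ * ∫ x : EuclideanSpace ℝ (Fin n), Real.exp (-(k * ‖x‖ ^ ((m + m : ℕ) : ℝ))) := by
        rw [integral_comp_mulVec hB (fun x => Real.exp (-(k * (x ⬝ᵥ x) ^ m))),
          integral_comp_dotProduct_self (fun r => Real.exp (-(k * r ^ m))), smul_eq_mul]
        simp_rw [← pow_mul, Real.rpow_natCast, two_mul]
    _ = _ := by
        rw [EuclideanSpace.integral_exp_neg_mul_norm_rpow hp hk, sqrt_det_transpose_mul_self,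
          Fintype.card_fin]
        field_simp
end

section
/- Let g be a positive definite form of degree d on ℝⁿ, G = {g ≤ 1}, and let μ_g denote Lebesgue measure restricted to G. Then for every degree-d form h with ‖h‖_{L¹(μ_g)} = ‖g‖_{L¹(μ_g)}, one has ‖h‖_{L²(μ_g)} ≥ ‖g‖_{L²(μ_g)}; moreover equality holds only if h = g or h = -g. -/
/-
Let β = (n + d) / (n + 2d). Slicing G = {g ≤ 1} into the sublevel sets {g ≤ s} = s^(1/d) • G
(Fubini), one gets ∫_G F g = β ∫_G F for every F that is positively homogeneous of degree d.
Applied to F = |h| and to F = g, together with ∫_G |h| = ∫_G g, this gives ∫_G |h| g = ∫_G g²,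
hence ∫_G (|h| - g)² = ∫_G h² - ∫_G g² ≥ 0. In the equality case |h| = g on the open set
{g < 1} ∋ 0, so the polynomials h² and g² agree near 0 and are therefore equal.
-/

open MeasureTheory MvPolynomial Set Filter Topology Module Pointwise

def IsPosHomogeneous {E : Type*} [SMul ℝ E] (f : E → ℝ) (d : ℕ) : Prop :=
  ∀ ⦃t : ℝ⦄, 0 ≤ t → ∀ x, f (t • x) = t ^ d * f x

namespace IsPosHomogeneous

section Module

variable {E : Type*} [AddCommGroup E] [Module ℝ E] {f : E → ℝ} {d : ℕ}

theorem abs (hf : IsPosHomogeneous f d) : IsPosHomogeneous (fun x => |f x|) d := by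
  intro t ht x
  simp only [hf ht, abs_mul, abs_pow, abs_of_nonneg ht]

theorem map_zero (hf : IsPosHomogeneous f d) (hd : d ≠ 0) : f 0 = 0 := by
  simpa [zero_pow hd] using hf le_rfl 0

theorem nonneg (hf : IsPosHomogeneous f d) (hd : d ≠ 0) (hpos : ∀ x ≠ 0, 0 < f x) (x : E) :
    0 ≤ f x := by
  rcases eq_or_ne x 0 with rfl | hx
  · exact (hf.map_zero hd).ge
  · exact (hpos x hx).le

theorem sublevel_pow_eq_smul (hf : IsPosHomogeneous f d) {c : ℝ} (hc : 0 < c) :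
    {x | f x ≤ c ^ d} = c • {x | f x ≤ 1} := by
  ext x
  rw [mem_smul_set_iff_inv_smul_mem₀ hc.ne', mem_ofPred_eq, mem_ofPred_eq, hf (by positivity),
    inv_pow, inv_mul_le_iff₀ (by positivity), mul_one]

end Module

section Normed

variable {E : Type*} [NormedAddCommGroup E] [NormedSpace ℝ E] {f : E → ℝ} {d : ℕ}

theorem norm_pow_mul_le (hf : IsPosHomogeneous f d) (hd : d ≠ 0) {m : ℝ}
    (hm : ∀ u, ‖u‖ = 1 → m ≤ f u) (x : E) : ‖x‖ ^ d * m ≤ f x := by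
  rcases eq_or_ne x 0 with rfl | hx
  · simp [hf.map_zero hd, zero_pow hd]
  have hx' : ‖x‖ ≠ 0 := norm_ne_zero_iff.2 hx
  calc ‖x‖ ^ d * m ≤ ‖x‖ ^ d * f (‖x‖⁻¹ • x) := by
        gcongr; exact hm _ (by rw [norm_smul, norm_inv, norm_norm, inv_mul_cancel₀ hx'])
    _ = f x := by rw [← hf (norm_nonneg x), smul_inv_smul₀ hx']

variable [FiniteDimensional ℝ E]

theorem isCompact_sublevel (hf : IsPosHomogeneous f d) (hd : d ≠ 0) (hfc : Continuous f)
    (hpos : ∀ x ≠ 0, 0 < f x) (c : ℝ) : IsCompact {x | f x ≤ c} := by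
  rcases subsingleton_or_nontrivial E with hE | hE
  · exact Set.subsingleton_of_subsingleton.isCompact
  obtain ⟨u₀, hu₀, hmin⟩ := (isCompact_sphere (0 : E) 1).exists_isMinOn
    (NormedSpace.sphere_nonempty.2 zero_le_one) hfc.continuousOn
  have hm : 0 < f u₀ := hpos u₀ (ne_zero_of_mem_sphere one_ne_zero ⟨u₀, hu₀⟩)
  refine Metric.isCompact_of_isClosed_isBounded (isClosed_le hfc continuous_const)
    ((Metric.isBounded_closedBall (x := (0 : E)) (r := max 1 (c / f u₀))).subset fun x hx => ?_)
  have hbound : ‖x‖ ^ d * f u₀ ≤ c :=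
    (hf.norm_pow_mul_le hd (fun u hu => hmin (by simpa using hu)) x).trans hx
  rw [mem_closedBall_zero_iff]
  rcases le_or_gt ‖x‖ 1 with h1 | h1
  · exact le_max_of_le_left h1
  · exact le_max_of_le_right ((le_self_pow₀ h1.le hd).trans ((le_div_iff₀ hm).2 hbound))

end Normed

end IsPosHomogeneous

namespace MvPolynomial

theorem IsHomogeneous.eval_smul_s10 {σ R : Type*} [CommSemiring R] {d : ℕ} {p : MvPolynomial σ R}
    (hp : p.IsHomogeneous d) (t : R) (x : σ → R) : eval (t • x) p = t ^ d * eval x p := by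
  rw [eval_eq, eval_eq, Finset.mul_sum]
  refine Finset.sum_congr rfl fun m hm => ?_
  have hdeg : ∑ i ∈ m.support, m i = d := by
    simpa [Finsupp.weight_apply, Finsupp.sum] using hp (mem_support_iff.mp hm)
  simp only [Pi.smul_apply, smul_eq_mul, mul_pow, Finset.prod_mul_distrib,
    Finset.prod_pow_eq_pow_sum, hdeg]
  ring

theorem IsHomogeneous.isPosHomogeneous_eval {σ : Type*} {d : ℕ} {p : MvPolynomial σ ℝ}
    (hp : p.IsHomogeneous d) : IsPosHomogeneous (fun x => eval x p) d :=
  fun t _ x => hp.eval_smul_s10 t x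

theorem eq_of_eventuallyEq_eval {σ : Type*} [Fintype σ] {p q : MvPolynomial σ ℝ} {x₀ : σ → ℝ}
    (h : (fun x => eval x p) =ᶠ[𝓝 x₀] fun x => eval x q) : p = q := by
  obtain ⟨δ, hδ, hball⟩ := Metric.eventually_nhds_iff_ball.1 h
  refine funext_set (fun i => Metric.ball (x₀ i) δ) (fun i => ?_) fun x hx => hball x ?_
  · rw [Real.ball_eq_Ioo]; exact Ioo_infinite (by linarith)
  · rwa [ball_pi _ hδ]

end MvPolynomial

theorem setIntegral_mul_one_sub_eq_integral_setIntegral_sublevel {α : Type*} [MeasurableSpace α]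
    {μ : Measure α} [SFinite μ] {f g : α → ℝ} (hgm : Measurable g) (hg0 : ∀ x, 0 ≤ g x)
    (hf : IntegrableOn f {x | g x ≤ 1} μ) :
    ∫ x in {x | g x ≤ 1}, f x * (1 - g x) ∂μ = ∫ s in Icc 0 1, ∫ x in {x | g x ≤ s}, f x ∂μ := by
  set G := {x | g x ≤ 1}
  -- Fubini for `K (s, x) = 1[g x ≤ s] f x`, since `∫ s in Icc 0 1, 1[g x ≤ s] = 1 - g x` on `G`.
  set K : ℝ × α → ℝ := {q : ℝ × α | g q.2 ≤ q.1}.indicator fun q => f q.2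
  have hK : Integrable K ((volume.restrict (Icc (0 : ℝ) 1)).prod (μ.restrict G)) :=
    (hf.comp_snd _).indicator (measurableSet_le (hgm.comp measurable_snd) measurable_fst)
  have hinner_x : ∀ s ∈ Icc (0 : ℝ) 1, ∫ x in G, K (s, x) ∂μ = ∫ x in {x | g x ≤ s}, f x ∂μ := by
    intro s hs
    change ∫ x in G, {x | g x ≤ s}.indicator f x ∂μ = _
    have hsub : {x | g x ≤ s} ⊆ G := fun x hx => le_trans hx hs.2
    rw [setIntegral_indicator (measurableSet_le hgm measurable_const), inter_eq_right.2 hsub]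
  have hinner_s : ∀ x ∈ G, ∫ s in Icc (0 : ℝ) 1, K (s, x) = f x * (1 - g x) := by
    intro x hx
    have hIcc : Icc 0 1 ∩ Ici (g x) = Icc (g x) 1 := by
      ext s
      simp only [mem_inter_iff, mem_Icc, mem_Ici]
      exact ⟨fun h => ⟨h.2, h.1.2⟩, fun h => ⟨⟨(hg0 x).trans h.1, h.2⟩, h.1⟩⟩
    change ∫ s in Icc 0 1, (Ici (g x)).indicator (fun _ => f x) s = _
    rw [setIntegral_indicator measurableSet_Ici, hIcc, setIntegral_const,
      Real.volume_real_Icc_of_le hx, smul_eq_mul, mul_comm]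
  rw [← setIntegral_congr_fun measurableSet_Icc hinner_x,
    integral_integral_swap (f := fun s x => K (s, x)) hK,
    setIntegral_congr_fun (measurableSet_le hgm measurable_const) hinner_s]

namespace IsPosHomogeneous

variable {E : Type*} [NormedAddCommGroup E] [NormedSpace ℝ E] [FiniteDimensional ℝ E]
  [MeasurableSpace E] [BorelSpace E] (μ : Measure E) [μ.IsAddHaarMeasure]
  {F g : E → ℝ} {d m : ℕ}

theorem setIntegral_smul_set (hF : IsPosHomogeneous F m) (s : Set E) {c : ℝ} (hc : 0 < c) :
    ∫ x in c • s, F x ∂μ = c ^ (finrank ℝ E + m) * ∫ x in s, F x ∂μ := by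
  have h := Measure.setIntegral_comp_smul_of_pos μ F s hc
  simp only [hF hc.le, integral_const_mul, smul_eq_mul] at h
  rw [pow_add, mul_assoc, h, ← mul_assoc, mul_inv_cancel₀ (by positivity), one_mul]

theorem setIntegral_sublevel (hg : IsPosHomogeneous g d) (hd : d ≠ 0) (hF : IsPosHomogeneous F m)
    {s : ℝ} (hs : 0 < s) :
    ∫ x in {x | g x ≤ s}, F x ∂μ
      = s ^ (((finrank ℝ E + m : ℕ) : ℝ) / d) * ∫ x in {x | g x ≤ 1}, F x ∂μ := by
  set c := s ^ ((d : ℝ)⁻¹)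
  have hc : 0 < c := Real.rpow_pos_of_pos hs _
  have hcd : c ^ d = s := by
    rw [← Real.rpow_natCast, ← Real.rpow_mul hs.le, inv_mul_cancel₀ (by exact_mod_cast hd),
      Real.rpow_one]
  rw [← hcd, hg.sublevel_pow_eq_smul hc, hF.setIntegral_smul_set μ _ hc, hcd, ← Real.rpow_natCast,
    ← Real.rpow_mul hs.le, inv_mul_eq_div]

theorem setIntegral_mul_eq (hg : IsPosHomogeneous g d) (hd : d ≠ 0) (hgm : Measurable g)
    (hg0 : ∀ x, 0 ≤ g x) (hF : IsPosHomogeneous F m) (hFi : IntegrableOn F {x | g x ≤ 1} μ) :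
    ∫ x in {x | g x ≤ 1}, F x * g x ∂μ
      = (finrank ℝ E + m) / (finrank ℝ E + m + d) * ∫ x in {x | g x ≤ 1}, F x ∂μ := by
  set β : ℝ := ((finrank ℝ E + m : ℕ) : ℝ) / d
  have hβ : 0 ≤ β := by positivity
  have hFg : IntegrableOn (fun x => F x * g x) {x | g x ≤ 1} μ := by
    refine hFi.mul_bdd hgm.aestronglyMeasurable (c := 1) ?_
    filter_upwards [ae_restrict_mem (measurableSet_le hgm measurable_const)] with x hx
    rw [Real.norm_of_nonneg (hg0 x)]
    exact hx
  have hlayer : ∫ x in {x | g x ≤ 1}, F x ∂μ - ∫ x in {x | g x ≤ 1}, F x * g x ∂μ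
      = (∫ x in {x | g x ≤ 1}, F x ∂μ) / (β + 1) := by
    rw [← integral_sub hFi hFg]
    simp_rw [← mul_one_sub]
    rw [setIntegral_mul_one_sub_eq_integral_setIntegral_sublevel hgm hg0 hFi,
      integral_Icc_eq_integral_Ioc,
      setIntegral_congr_fun measurableSet_Ioc fun s hs => setIntegral_sublevel μ hg hd hF hs.1,
      integral_mul_const, ← intervalIntegral.integral_of_le zero_le_one,
      integral_rpow (Or.inl (by linarith)), Real.one_rpow, Real.zero_rpow (by positivity)]
    ring
  calc ∫ x in {x | g x ≤ 1}, F x * g x ∂μ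
      = (∫ x in {x | g x ≤ 1}, F x ∂μ) - (∫ x in {x | g x ≤ 1}, F x ∂μ) / (β + 1) := by
        linarith
    _ = _ := by
        simp only [β]
        push_cast
        field_simp
        ring

theorem setIntegral_sub_sq_eq (hg : IsPosHomogeneous g d) (hd : d ≠ 0) (hgc : Continuous g)
    (hg0 : ∀ x, 0 ≤ g x) (hG : IsCompact {x | g x ≤ 1}) (hF : IsPosHomogeneous F d)
    (hFc : Continuous F) (hL1 : ∫ x in {x | g x ≤ 1}, F x ∂μ = ∫ x in {x | g x ≤ 1}, g x ∂μ) :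
    ∫ x in {x | g x ≤ 1}, (F x - g x) ^ 2 ∂μ
      = ∫ x in {x | g x ≤ 1}, F x ^ 2 ∂μ - ∫ x in {x | g x ≤ 1}, g x ^ 2 ∂μ := by
  have hint {φ : E → ℝ} (hφ : Continuous φ) : IntegrableOn φ {x | g x ≤ 1} μ :=
    hφ.continuousOn.integrableOn_compact hG
  have hcross : ∫ x in {x | g x ≤ 1}, F x * g x ∂μ = ∫ x in {x | g x ≤ 1}, g x * g x ∂μ := by
    rw [setIntegral_mul_eq μ hg hd hgc.measurable hg0 hF (hint hFc),
      setIntegral_mul_eq μ hg hd hgc.measurable hg0 hg (hint hgc), hL1]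
  calc ∫ x in {x | g x ≤ 1}, (F x - g x) ^ 2 ∂μ
      = ∫ x in {x | g x ≤ 1}, (F x ^ 2 - g x ^ 2) - 2 * (F x * g x - g x * g x) ∂μ := by
        congr 1; ext x; ring
    _ = _ := by
        rw [integral_sub (hint (by fun_prop)) (hint (by fun_prop)), integral_const_mul,
          integral_sub (hint (by fun_prop)) (hint (by fun_prop)),
          integral_sub (hint (by fun_prop)) (hint (by fun_prop)), hcross]
        ring

end IsPosHomogeneous

theorem eqOn_of_setIntegral_sub_sq_eq_zero {E : Type*} [TopologicalSpace E] [MeasurableSpace E]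
    [OpensMeasurableSpace E] {μ : Measure E} [μ.IsOpenPosMeasure] {F g : E → ℝ} {s U : Set E}
    (hF : Continuous F) (hg : Continuous g) (hi : IntegrableOn (fun x => (F x - g x) ^ 2) s μ)
    (hU : IsOpen U) (hUs : U ⊆ s) (h0 : ∫ x in s, (F x - g x) ^ 2 ∂μ = 0) : EqOn F g U := by
  have hae : (fun x => (F x - g x) ^ 2) =ᵐ[μ.restrict s] 0 :=
    (integral_eq_zero_iff_of_nonneg (fun x => sq_nonneg _) hi).1 h0
  refine Measure.eqOn_open_of_ae_eq (μ := μ) ?_ hU hF.continuousOn hg.continuousOn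
  filter_upwards [ae_restrict_of_ae_restrict_of_subset hUs hae] with x hx
  simpa [sub_eq_zero] using hx


theorem stmt10_general (n d : ℕ) (hd : 1 ≤ d)
    (g h : MvPolynomial (Fin n) ℝ) (hg : g.IsHomogeneous d)
    (hgpos : ∀ x : Fin n → ℝ, x ≠ 0 → 0 < eval x g)
    (hh : h.IsHomogeneous d)
    (hL1 : ∫ x in {x : Fin n → ℝ | eval x g ≤ 1}, |eval x h|
         = ∫ x in {x : Fin n → ℝ | eval x g ≤ 1}, |eval x g|) :
    Real.sqrt (∫ x in {x : Fin n → ℝ | eval x g ≤ 1}, |eval x g| ^ 2)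
      ≤ Real.sqrt (∫ x in {x : Fin n → ℝ | eval x g ≤ 1}, |eval x h| ^ 2) ∧
    (Real.sqrt (∫ x in {x : Fin n → ℝ | eval x g ≤ 1}, |eval x h| ^ 2)
        = Real.sqrt (∫ x in {x : Fin n → ℝ | eval x g ≤ 1}, |eval x g| ^ 2)
      → h = g ∨ h = -g) := by
  have hd0 : d ≠ 0 := by omega
  have hgH := hg.isPosHomogeneous_eval
  have hhH := hh.isPosHomogeneous_eval.abs
  have hgc : Continuous fun x : Fin n → ℝ => eval x g := continuous_eval g
  have hhc : Continuous fun x : Fin n → ℝ => |eval x h| := (continuous_eval h).abs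
  have hg0 := hgH.nonneg hd0 hgpos
  have hG := hgH.isCompact_sublevel hd0 hgc hgpos 1
  simp only [abs_of_nonneg (hg0 _)] at hL1 ⊢
  have hdefect := hgH.setIntegral_sub_sq_eq volume hd0 hgc hg0 hG hhH hhc hL1
  have hsq_nonneg (φ : (Fin n → ℝ) → ℝ) : 0 ≤ ∫ x in {x | eval x g ≤ 1}, φ x ^ 2 :=
    setIntegral_nonneg (hgc.measurable measurableSet_Iic) fun x _ => sq_nonneg _
  refine ⟨Real.sqrt_le_sqrt (by linarith [hsq_nonneg fun x => |eval x h| - eval x g]),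
    fun heq => ?_⟩
  rw [Real.sqrt_inj (hsq_nonneg _) (hsq_nonneg _), ← sub_eq_zero, ← hdefect] at heq
  have hnear : ∀ᶠ x in 𝓝 0, |eval x h| = eval x g := by
    have hU : IsOpen {x | eval x g < 1} := isOpen_lt hgc continuous_const
    filter_upwards [hU.mem_nhds ((hgH.map_zero hd0).trans_lt one_pos)] with x hx
    exact eqOn_of_setIntegral_sub_sq_eq_zero hhc hgc
      (((hhc.sub hgc).pow 2).continuousOn.integrableOn_compact hG) hU
      (ofPred_subset_ofPred.2 fun _ => le_of_lt) heq hx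
  refine sq_eq_sq_iff_eq_or_eq_neg.1 (eq_of_eventuallyEq_eval (x₀ := 0) ?_)
  filter_upwards [hnear] with x hx
  rw [map_pow, map_pow, ← sq_abs, hx]

theorem stmt10 (n d : ℕ) (hn : 1 ≤ n) (hd : 1 ≤ d)
    (g h : MvPolynomial (Fin n) ℝ) (hg : g.IsHomogeneous d)
    (hgpos : ∀ x : Fin n → ℝ, x ≠ 0 → 0 < eval x g)
    (hh : h.IsHomogeneous d)
    (hL1 : ∫ x in {x : Fin n → ℝ | eval x g ≤ 1}, |eval x h|
         = ∫ x in {x : Fin n → ℝ | eval x g ≤ 1}, |eval x g|) :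
    Real.sqrt (∫ x in {x : Fin n → ℝ | eval x g ≤ 1}, |eval x g| ^ 2)
      ≤ Real.sqrt (∫ x in {x : Fin n → ℝ | eval x g ≤ 1}, |eval x h| ^ 2) ∧
    (Real.sqrt (∫ x in {x : Fin n → ℝ | eval x g ≤ 1}, |eval x h| ^ 2)
        = Real.sqrt (∫ x in {x : Fin n → ℝ | eval x g ≤ 1}, |eval x g| ^ 2)
      → h = g ∨ h = -g) :=
  stmt10_general n d hd g h hg hgpos hh hL1
end

section
/- Let g be a positive definite form of degree d on ℝⁿ with sublevel set G = {g ≤ 1}. Then ‖g‖²_{L²(μ_g)} = ((n+d)/(n+2d)) · ‖g‖_{L¹(μ_g)}, where μ_g is Lebesgue measure restricted to G. -/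
/-!
Homogeneity gives `{g ≤ t} = t ^ (1 / d) • G`, so `vol {g ≤ t} = t ^ (n / d) * vol G` for
`0 < t ≤ 1`: under `μ_G` the tail `μ_G {t < g}` is `(1 - t ^ (n / d)) * vol G`. The layer cake
formula then gives `∫_G g ^ p = (n / d) / (n / d + p) * vol G` for every `p > 0`, and the
ratio of the cases `p = 2` and `p = 1` is `(n + d) / (n + 2 d)`.
-/

open MeasureTheory MvPolynomial Set Pointwise

namespace MvPolynomial.IsHomogeneous

variable {σ : Type*} [Fintype σ] {d : ℕ}

theorem eval_smul_s11 {R : Type*} [CommSemiring R] {g : MvPolynomial σ R} (hg : g.IsHomogeneous d)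
    (c : R) (x : σ → R) : eval (c • x) g = c ^ d * eval x g := by
  simp only [eval_eq', Finset.mul_sum]
  refine Finset.sum_congr rfl fun m hm => ?_
  have hdeg : ∑ i, m i = d := by
    rw [← hg (mem_support_iff.mp hm), Finsupp.weight_apply, Finsupp.sum_fintype] <;> simp
  simp only [Pi.smul_apply, smul_eq_mul, mul_pow, Finset.prod_mul_distrib,
    Finset.prod_pow_eq_pow_sum, hdeg]
  ring

theorem eval_zero {R : Type*} [CommSemiring R] {g : MvPolynomial σ R} (hg : g.IsHomogeneous d)
    (hd : d ≠ 0) : eval 0 g = 0 := by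
  simpa [zero_pow hd] using hg.eval_smul_s11 0 0

variable {g : MvPolynomial σ ℝ}

theorem eval_nonneg (hg : g.IsHomogeneous d) (hd : d ≠ 0)
    (hgpos : ∀ x : σ → ℝ, x ≠ 0 → 0 < eval x g) (x : σ → ℝ) : 0 ≤ eval x g := by
  rcases eq_or_ne x 0 with rfl | hx
  · exact (hg.eval_zero hd).ge
  · exact (hgpos x hx).le

theorem exists_pos_mul_norm_pow_le_eval (hg : g.IsHomogeneous d) (hd : d ≠ 0)
    (hgpos : ∀ x : σ → ℝ, x ≠ 0 → 0 < eval x g) :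
    ∃ m > 0, ∀ x : σ → ℝ, m * ‖x‖ ^ d ≤ eval x g := by
  obtain ⟨m, hm, hmin⟩ : ∃ m > 0, ∀ u ∈ Metric.sphere (0 : σ → ℝ) 1, m ≤ eval u g := by
    rcases (Metric.sphere (0 : σ → ℝ) 1).eq_empty_or_nonempty with hS | hS
    · exact ⟨1, one_pos, by simp [hS]⟩
    obtain ⟨z, hz, hzmin⟩ :=
      (isCompact_sphere 0 1).exists_isMinOn hS (continuous_eval g).continuousOn
    exact ⟨eval z g, hgpos z (Metric.ne_of_mem_sphere hz one_ne_zero), fun u hu => hzmin hu⟩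
  refine ⟨m, hm, fun x => ?_⟩
  rcases eq_or_ne x 0 with rfl | hx
  · rw [norm_zero, zero_pow hd, mul_zero, hg.eval_zero hd]
  have hnx : ‖x‖ ≠ 0 := norm_ne_zero_iff.mpr hx
  have hu : ‖x‖⁻¹ • x ∈ Metric.sphere (0 : σ → ℝ) 1 := by
    simp [norm_smul, hnx]
  calc m * ‖x‖ ^ d ≤ eval (‖x‖⁻¹ • x) g * ‖x‖ ^ d := by gcongr; exact hmin _ hu
    _ = eval x g := by
      rw [hg.eval_smul_s11, inv_pow, mul_comm, ← mul_assoc, mul_inv_cancel₀ (pow_ne_zero d hnx),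
        one_mul]

theorem isCompact_setOf_eval_le (hg : g.IsHomogeneous d) (hd : d ≠ 0)
    (hgpos : ∀ x : σ → ℝ, x ≠ 0 → 0 < eval x g) (c : ℝ) :
    IsCompact {x : σ → ℝ | eval x g ≤ c} := by
  obtain ⟨m, hm, hle⟩ := hg.exists_pos_mul_norm_pow_le_eval hd hgpos
  refine Metric.isCompact_of_isClosed_isBounded
    (isClosed_le (continuous_eval g) continuous_const)
    ((Metric.isBounded_closedBall (x := 0) (r := max 1 (c / m))).subset fun x hx => ?_)
  rw [mem_closedBall_zero_iff]
  rcases le_or_gt ‖x‖ 1 with h1 | h1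
  · exact h1.trans (le_max_left _ _)
  calc ‖x‖ ≤ ‖x‖ ^ d := le_self_pow₀ h1.le hd
    _ ≤ c / m := by rw [le_div_iff₀ hm, mul_comm]; exact (hle x).trans hx
    _ ≤ max 1 (c / m) := le_max_right _ _

theorem volume_setOf_eval_le (hg : g.IsHomogeneous d) (hd : d ≠ 0) {t : ℝ} (ht : 0 < t) :
    volume {x : σ → ℝ | eval x g ≤ t}
      = ENNReal.ofReal (t ^ ((Fintype.card σ : ℝ) / d)) * volume {x : σ → ℝ | eval x g ≤ 1} := by
  set c := t ^ ((d : ℝ)⁻¹)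
  have hc : 0 < c := Real.rpow_pos_of_pos ht _
  have hcd : c ^ d = t := Real.rpow_inv_natCast_pow ht.le hd
  have hdil : {x : σ → ℝ | eval x g ≤ t} = c • {x : σ → ℝ | eval x g ≤ 1} := by
    ext x
    simp only [mem_smul_set_iff_inv_smul_mem₀ hc.ne', mem_ofPred_eq, hg.eval_smul_s11, inv_pow, hcd,
      inv_mul_eq_div, div_le_one ht]
  rw [hdil, Measure.addHaar_smul_of_nonneg _ hc.le, Module.finrank_fintype_fun_eq_card,
    ← Real.rpow_natCast, ← Real.rpow_mul ht.le, inv_mul_eq_div]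

end MvPolynomial.IsHomogeneous

theorem integral_Ioc_one_sub_rpow_mul_rpow {a p : ℝ} (ha : 0 ≤ a) (hp : 0 < p) :
    IntegrableOn (fun t : ℝ => (1 - t ^ a) * t ^ (p - 1)) (Ioc 0 1) ∧
      ∫ t in Ioc 0 1, (1 - t ^ a) * t ^ (p - 1) = a / (p * (a + p)) := by
  have hsplit : EqOn (fun t : ℝ => (1 - t ^ a) * t ^ (p - 1))
      (fun t => t ^ (p - 1) - t ^ (a + p - 1)) (Ioc 0 1) := fun t ht => by
    simp only [add_sub_assoc, Real.rpow_add ht.1]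
    ring
  have hint : ∀ r : ℝ, 0 < r → IntegrableOn (fun t : ℝ => t ^ (r - 1)) (Ioc 0 1) := fun r hr =>
    (intervalIntegrable_iff_integrableOn_Ioc_of_le zero_le_one).mp
      (intervalIntegral.intervalIntegrable_rpow' (by linarith))
  have hval : ∀ r : ℝ, 0 < r → ∫ t in Ioc 0 1, t ^ (r - 1) = 1 / r := fun r hr => by
    rw [← intervalIntegral.integral_of_le zero_le_one, integral_rpow (Or.inl (by linarith)),
      sub_add_cancel, Real.one_rpow, Real.zero_rpow hr.ne', sub_zero]
  have hap : 0 < a + p := by linarith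
  refine ⟨((hint p hp).sub (hint _ hap)).congr_fun hsplit.symm measurableSet_Ioc, ?_⟩
  rw [setIntegral_congr_fun measurableSet_Ioc hsplit, integral_sub (hint p hp) (hint _ hap),
    hval p hp, hval _ hap]
  field_simp
  ring

section Sublevel

variable {α : Type*} [MeasurableSpace α] {μ : Measure α} {f : α → ℝ} {a : ℝ}

theorem measure_restrict_lt_of_measure_le_eq (hf : Measurable f) (ha : 0 ≤ a)
    (hfin : μ {x | f x ≤ 1} ≠ ⊤)
    (hscale : ∀ t ∈ Ioc (0 : ℝ) 1, μ {x | f x ≤ t} = ENNReal.ofReal (t ^ a) * μ {x | f x ≤ 1})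
    {t : ℝ} (ht : 0 < t) :
    μ.restrict {x | f x ≤ 1} {x | t < f x} = ENNReal.ofReal (1 - t ^ a) * μ {x | f x ≤ 1} := by
  rw [Measure.restrict_apply (measurableSet_lt measurable_const hf)]
  rcases le_or_gt t 1 with ht1 | ht1
  · have hsub : {x | f x ≤ t} ⊆ {x | f x ≤ 1} := fun x hx => le_trans hx ht1
    have hdiff : {x | t < f x} ∩ {x | f x ≤ 1} = {x | f x ≤ 1} \ {x | f x ≤ t} := by
      ext; simp [and_comm]
    rw [hdiff, measure_sdiff hsub (measurableSet_le hf measurable_const).nullMeasurableSet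
        (ne_top_of_le_ne_top hfin (measure_mono hsub)), hscale t ⟨ht, ht1⟩,
      ENNReal.ofReal_sub _ (by positivity), ENNReal.ofReal_one, ENNReal.sub_mul fun _ _ => hfin,
      one_mul]
  · have hempty : {x | t < f x} ∩ {x | f x ≤ 1} = ∅ := by
      ext x
      simp only [mem_inter_iff, mem_ofPred_eq, mem_empty_iff_false, iff_false, not_and, not_le]
      exact fun h => ht1.trans h
    rw [hempty, measure_empty,
      ENNReal.ofReal_of_nonpos (sub_nonpos.mpr (Real.one_le_rpow ht1.le ha)), zero_mul]

theorem setLIntegral_rpow_of_measure_le_eq (hf : Measurable f) (hf0 : ∀ x, 0 ≤ f x) (ha : 0 ≤ a)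
    (hfin : μ {x | f x ≤ 1} ≠ ⊤)
    (hscale : ∀ t ∈ Ioc (0 : ℝ) 1, μ {x | f x ≤ t} = ENNReal.ofReal (t ^ a) * μ {x | f x ≤ 1})
    {p : ℝ} (hp : 0 < p) :
    ∫⁻ x in {x | f x ≤ 1}, ENNReal.ofReal (f x ^ p) ∂μ
      = ENNReal.ofReal (a / (a + p)) * μ {x | f x ≤ 1} := by
  set h : ℝ → ℝ := fun t => (1 - t ^ a) * t ^ (p - 1)
  obtain ⟨hint, hval⟩ := integral_Ioc_one_sub_rpow_mul_rpow ha hp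
  have htail : ∀ t ∈ Ioi (0 : ℝ), μ.restrict {x | f x ≤ 1} {x | t < f x} *
      ENNReal.ofReal (t ^ (p - 1)) = ENNReal.ofReal (h t) * μ {x | f x ≤ 1} := fun t ht => by
    rw [measure_restrict_lt_of_measure_le_eq hf ha hfin hscale ht, mul_right_comm,
      ← ENNReal.ofReal_mul' (Real.rpow_nonneg (le_of_lt ht) _)]
  have hIoi : ∫⁻ t in Ioi 1, ENNReal.ofReal (h t) = 0 :=
    setLIntegral_eq_zero measurableSet_Ioi fun t (ht : 1 < t) => ENNReal.ofReal_of_nonpos <|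
      mul_nonpos_of_nonpos_of_nonneg (sub_nonpos.mpr (Real.one_le_rpow ht.le ha))
        (Real.rpow_nonneg (zero_le_one.trans ht.le) _)
  have hnonneg : 0 ≤ᵐ[volume.restrict (Ioc 0 1)] h :=
    (ae_restrict_iff' measurableSet_Ioc).mpr <| ae_of_all _ fun t ht =>
      mul_nonneg (sub_nonneg.mpr (Real.rpow_le_one ht.1.le ht.2 ha)) (Real.rpow_nonneg ht.1.le _)
  rw [lintegral_rpow_eq_lintegral_meas_lt_mul _ (ae_of_all _ hf0) hf.aemeasurable hp,
    setLIntegral_congr_fun measurableSet_Ioi htail, lintegral_mul_const _ (by fun_prop),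
    ← Ioc_union_Ioi_eq_Ioi zero_le_one,
    lintegral_union measurableSet_Ioi (Ioc_disjoint_Ioi le_rfl), hIoi, add_zero,
    ← ofReal_integral_eq_lintegral_ofReal hint hnonneg, hval, ← mul_assoc,
    ← ENNReal.ofReal_mul hp.le]
  congr 2
  field_simp

theorem setIntegral_rpow_of_measure_le_eq (hf : Measurable f) (hf0 : ∀ x, 0 ≤ f x) (ha : 0 ≤ a)
    (hfin : μ {x | f x ≤ 1} ≠ ⊤)
    (hscale : ∀ t ∈ Ioc (0 : ℝ) 1, μ {x | f x ≤ t} = ENNReal.ofReal (t ^ a) * μ {x | f x ≤ 1})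
    {p : ℝ} (hp : 0 < p) :
    ∫ x in {x | f x ≤ 1}, f x ^ p ∂μ = a / (a + p) * μ.real {x | f x ≤ 1} := by
  rw [integral_eq_lintegral_of_nonneg_ae (ae_of_all _ fun x => Real.rpow_nonneg (hf0 x) p)
      (hf.pow_const p).aestronglyMeasurable,
    setLIntegral_rpow_of_measure_le_eq hf hf0 ha hfin hscale hp, ENNReal.toReal_mul,
    ENNReal.toReal_ofReal (by positivity), measureReal_def]

end Sublevel

theorem stmt11_general (n d : ℕ) (hd : 1 ≤ d)
    (g : MvPolynomial (Fin n) ℝ) (hg : g.IsHomogeneous d)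
    (hgpos : ∀ x : Fin n → ℝ, x ≠ 0 → 0 < eval x g) :
    ∫ x in {x : Fin n → ℝ | eval x g ≤ 1}, (eval x g) ^ 2
      = (((n : ℝ) + d) / ((n : ℝ) + 2 * d)) *
          ∫ x in {x : Fin n → ℝ | eval x g ≤ 1}, eval x g := by
  have hd0 : d ≠ 0 := Nat.one_le_iff_ne_zero.mp hd
  have hmoment : ∀ p : ℝ, 0 < p → ∫ x in {x : Fin n → ℝ | eval x g ≤ 1}, eval x g ^ p
      = (n / d) / (n / d + p) * volume.real {x : Fin n → ℝ | eval x g ≤ 1} := fun p hp =>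
    setIntegral_rpow_of_measure_le_eq (continuous_eval g).measurable (hg.eval_nonneg hd0 hgpos)
      (by positivity) (hg.isCompact_setOf_eval_le hd0 hgpos 1).measure_lt_top.ne
      (fun t ht => by simpa only [Fintype.card_fin] using hg.volume_setOf_eval_le hd0 ht.1) hp
  have hsecond := hmoment 2 two_pos
  have hfirst := hmoment 1 one_pos
  simp only [Real.rpow_two] at hsecond
  simp only [Real.rpow_one] at hfirst
  rw [hsecond, hfirst]
  have hdR : (d : ℝ) ≠ 0 := by exact_mod_cast hd0
  field_simp

theorem stmt11 (n d : ℕ) (hn : 1 ≤ n) (hd : 1 ≤ d)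
    (g : MvPolynomial (Fin n) ℝ) (hg : g.IsHomogeneous d)
    (hgpos : ∀ x : Fin n → ℝ, x ≠ 0 → 0 < eval x g) :
    ∫ x in {x : Fin n → ℝ | eval x g ≤ 1}, (eval x g) ^ 2
      = (((n : ℝ) + d) / ((n : ℝ) + 2 * d)) *
          ∫ x in {x : Fin n → ℝ | eval x g ≤ 1}, eval x g :=
  stmt11_general n d hd g hg hgpos
end

section
/- Let g be a non-negative form of even degree d on ℝⁿ (n ≥ 2) whose only zeros with last coordinate zero is the origin, and let g̃(y) = g(y,1) for y ∈ ℝ^{n-1}. Then the Lebesgue volume of {x ∈ ℝⁿ : g(x) ≤ 1} equals (2/n) ∫_{ℝ^{n-1}} g̃(y)^{-n/d} dy (where both sides may be infinite simultaneously). -/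
open MeasureTheory MvPolynomial Pointwise

lemma aux_eval_smul {σ : Type*} [Fintype σ] (φ : MvPolynomial σ ℝ) {n : ℕ}
    (hφ : φ.IsHomogeneous n) (c : ℝ) (x : σ → ℝ) :
    eval (c • x) φ = c ^ n * eval x φ := by
  rw [eval_eq', eval_eq', Finset.mul_sum]
  refine Finset.sum_congr rfl fun d hd => ?_
  have hdeg : Finsupp.weight 1 d = n := hφ (mem_support_iff.mp hd)
  have hsum : ∑ i, d i = n := by
    rw [← hdeg, Finsupp.weight_apply, Finsupp.sum_fintype]
    · simp
    · simp
  calc coeff d φ * ∏ i, (c • x) i ^ d i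
      = coeff d φ * ((∏ i, c ^ d i) * ∏ i, x i ^ d i) := by
        rw [← Finset.prod_mul_distrib]; simp [mul_pow]
    _ = c ^ n * (coeff d φ * ∏ i, x i ^ d i) := by
        rw [Finset.prod_pow_eq_pow_sum]; rw [hsum]; ring

lemma aux_1d (m d : ℕ) (hd : 2 ≤ d) (hde : Even d) (a : ℝ) (ha : 0 ≤ a) :
    ∫⁻ t : ℝ, Set.indicator {t : ℝ | t ^ d * a ≤ 1} (fun t => ENNReal.ofReal (|t| ^ m)) t
      = (2 / (m + 1) : ENNReal) * ENNReal.ofReal a ^ (-((m : ℝ) + 1) / d) := by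
  have hd0 : (d : ℝ) ≠ 0 := by positivity
  have hc0 : (2 / (m + 1) : ENNReal) ≠ 0 := by
    simp [ENNReal.div_eq_zero_iff]
  have hexp : -((m : ℝ) + 1) / d < 0 := by
    apply div_neg_of_neg_of_pos (neg_neg_of_pos (by positivity))
    positivity
  rcases eq_or_lt_of_le ha with rfl | ha'
  · have hs : {t : ℝ | t ^ d * 0 ≤ 1} = Set.univ := by
      ext t; simp [zero_le_one]
    rw [hs, Set.indicator_univ]
    have hlhs : ∫⁻ t : ℝ, ENNReal.ofReal (|t| ^ m) = ⊤ := by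
      rw [eq_top_iff]
      calc (⊤ : ENNReal) = volume (Set.Ici (1:ℝ)) := by simp
        _ = ∫⁻ t : ℝ, Set.indicator (Set.Ici (1:ℝ)) 1 t := by
            rw [lintegral_indicator_one measurableSet_Ici]
        _ ≤ _ := by
            refine lintegral_mono fun t => ?_
            by_cases h : t ∈ Set.Ici (1:ℝ)
            · rw [Set.indicator_of_mem h]
              simp only [Pi.one_apply]
              rw [show (1:ENNReal) = ENNReal.ofReal 1 by simp]
              refine ENNReal.ofReal_le_ofReal (one_le_pow₀ ?_)
              exact le_trans h (le_abs_self t)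
            · simp [Set.indicator_of_notMem h]
    rw [hlhs, ENNReal.ofReal_zero, ENNReal.zero_rpow_of_neg hexp, ENNReal.mul_top hc0]
  · set R : ℝ := a ^ (-(1:ℝ)/d) with hR
    have hRpos : 0 < R := Real.rpow_pos_of_pos ha' _
    have hRd : R ^ d = a⁻¹ := by
      rw [← Real.rpow_natCast R d, hR, ← Real.rpow_mul ha,
        div_mul_cancel₀ _ hd0, Real.rpow_neg_one]
    have hset : {t : ℝ | t ^ d * a ≤ 1} = Set.Icc (-R) R := by
      ext t
      simp only [Set.mem_setOf_eq, Set.mem_Icc, ← abs_le]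
      rw [← le_div_iff₀ ha', one_div, ← hRd, ← hde.pow_abs]
      exact pow_le_pow_iff_left₀ (abs_nonneg t) hRpos.le (by omega)
    rw [hset, lintegral_indicator measurableSet_Icc]
    have hcont : Continuous fun t : ℝ => |t| ^ m := continuous_abs.pow m
    have hint : IntegrableOn (fun t : ℝ => |t| ^ m) (Set.Icc (-R) R) :=
      hcont.integrableOn_Icc
    rw [← ofReal_integral_eq_lintegral_ofReal hint
      (Filter.Eventually.of_forall fun t => by positivity)]
    have h1 : ∫ t in (0:ℝ)..R, |t| ^ m = R ^ (m+1) / (m+1) := by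
      rw [intervalIntegral.integral_congr (g := fun t : ℝ => t ^ m) ?_,
        integral_pow]
      · simp
      · intro t ht
        rw [Set.uIcc_of_le hRpos.le] at ht
        simp [abs_of_nonneg ht.1]
    have h2 : ∫ t in (-R)..(0:ℝ), |t| ^ m = R ^ (m+1) / (m+1) := by
      have := intervalIntegral.integral_comp_neg (a := (0:ℝ)) (b := R)
        (fun t : ℝ => |t| ^ m)
      simp only [neg_zero, abs_neg] at this
      rw [← this, h1]
    have hval : ∫ t in Set.Icc (-R) R, |t| ^ m = 2 * (R ^ (m+1) / (m+1)) := by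
      rw [MeasureTheory.integral_Icc_eq_integral_Ioc,
        ← intervalIntegral.integral_of_le (by linarith : -R ≤ R),
        ← intervalIntegral.integral_add_adjacent_intervals (a := -R) (b := (0:ℝ)) (c := R)
          (hcont.intervalIntegrable _ _) (hcont.intervalIntegrable _ _), h1, h2]
      ring
    have hRm : R ^ (m+1) = a ^ (-((m:ℝ)+1)/d) := by
      rw [← Real.rpow_natCast R (m+1), hR, ← Real.rpow_mul ha]
      congr 1
      push_cast
      ring
    rw [hval, hRm, ENNReal.ofReal_mul (by norm_num : (0:ℝ) ≤ 2),
      ENNReal.ofReal_div_of_pos (by positivity),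
      ← ENNReal.ofReal_rpow_of_pos ha']
    have hm1 : ENNReal.ofReal ((m:ℝ)+1) = ((m:ENNReal)+1) := by
      rw [ENNReal.ofReal_add (by positivity) zero_le_one]
      simp
    rw [hm1]
    norm_num
    simp only [div_eq_mul_inv]
    ring

theorem stmt12 (m d : ℕ) (hm : 1 ≤ m) (hd : 2 ≤ d) (hde : Even d)
    (g : MvPolynomial (Fin (m + 1)) ℝ) (hg : g.IsHomogeneous d)
    (hnn : ∀ x : Fin (m + 1) → ℝ, 0 ≤ eval x g)
    (hlast : ∀ y : Fin m → ℝ, y ≠ 0 → eval (Fin.snoc y 0) g ≠ 0) :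
    volume {x : Fin (m + 1) → ℝ | eval x g ≤ 1}
      = (2 / (m + 1) : ENNReal) *
          ∫⁻ y : Fin m → ℝ,
            (ENNReal.ofReal (eval (Fin.snoc y 1) g)) ^ (-((m : ℝ) + 1) / d) := by
  -- continuity facts
  have hsnocCont : Continuous fun p : ℝ × (Fin m → ℝ) => (Fin.snoc p.2 p.1 : Fin (m+1) → ℝ) := by
    refine continuous_pi fun j => ?_
    refine Fin.lastCases ?_ (fun i => ?_) j <;> simp
    · exact continuous_fst
    · exact (continuous_apply i).comp continuous_snd
  have hgt : Continuous fun z : Fin m → ℝ => eval (Fin.snoc z 1 : Fin (m+1) → ℝ) g :=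
    g.continuous_eval.comp (hsnocCont.comp (Continuous.prodMk_right 1))
  -- the joint set and its measurability
  set A : Set (ℝ × (Fin m → ℝ)) :=
    {p | p.1 ^ d * eval (Fin.snoc p.2 1 : Fin (m+1) → ℝ) g ≤ 1} with hA
  have hAm : MeasurableSet A := by
    refine measurableSet_le ?_ measurable_const
    exact ((continuous_fst.pow d).mul (hgt.comp continuous_snd)).measurable
  have hsnoc : ∀ (c : ℝ) (z : Fin m → ℝ),
      (Fin.snoc (c • z) c : Fin (m+1) → ℝ) = c • (Fin.snoc z 1 : Fin (m+1) → ℝ) := by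
    intro c z
    funext j
    refine Fin.lastCases ?_ (fun i => ?_) j <;> simp
  -- Step 1 : Fubini
  have step1 : volume {x : Fin (m + 1) → ℝ | eval x g ≤ 1}
      = ∫⁻ t : ℝ, volume {y : Fin m → ℝ | eval (Fin.snoc y t) g ≤ 1} := by
    have hS : MeasurableSet {x : Fin (m + 1) → ℝ | eval x g ≤ 1} :=
      measurableSet_le g.continuous_eval.measurable measurable_const
    have hmp := (MeasureTheory.volume_preserving_piFinSuccAbove
      (fun _ : Fin (m+1) => ℝ) (Fin.last m)).symm
    rw [← hmp.measure_preimage hS.nullMeasurableSet]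
    have hpre : (MeasurableEquiv.piFinSuccAbove (fun _ : Fin (m+1) => ℝ) (Fin.last m)).symm ⁻¹'
        {x : Fin (m + 1) → ℝ | eval x g ≤ 1}
        = {p : ℝ × (Fin m → ℝ) | eval (Fin.snoc p.2 p.1) g ≤ 1} := by
      ext p
      simp [MeasurableEquiv.piFinSuccAbove, Fin.snocEquiv]
    rw [hpre, Measure.volume_eq_prod, Measure.prod_apply]
    · rfl
    · exact measurableSet_le (g.continuous_eval.comp hsnocCont).measurable measurable_const
  -- Step 2 : scaling for t ≠ 0
  have step2 : ∀ t : ℝ, t ≠ 0 →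
      volume {y : Fin m → ℝ | eval (Fin.snoc y t) g ≤ 1}
        = ENNReal.ofReal (|t| ^ m) *
            volume {z : Fin m → ℝ | t ^ d * eval (Fin.snoc z 1 : Fin (m+1) → ℝ) g ≤ 1} := by
    intro t ht
    have hsets : {y : Fin m → ℝ | eval (Fin.snoc y t) g ≤ 1}
        = t • {z : Fin m → ℝ | t ^ d * eval (Fin.snoc z 1 : Fin (m+1) → ℝ) g ≤ 1} := by
      ext y
      rw [Set.mem_smul_set_iff_inv_smul_mem₀ ht]
      have hyt : (Fin.snoc y t : Fin (m+1) → ℝ)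
          = t • (Fin.snoc (t⁻¹ • y) 1 : Fin (m+1) → ℝ) := by
        rw [← hsnoc, smul_inv_smul₀ ht]
      simp only [Set.mem_setOf_eq, hyt, aux_eval_smul g hg]
    rw [hsets, Measure.addHaar_smul, Module.finrank_fin_fun, abs_pow]
  -- Step 3 : put everything together
  rw [step1]
  have hae : ∀ᵐ t : ℝ, t ≠ 0 := by
    refine (ae_iff).mpr ?_
    have h0 : {t : ℝ | ¬ t ≠ 0} = {0} := by ext t; simp
    rw [h0]
    exact measure_singleton 0
  calc ∫⁻ t : ℝ, volume {y : Fin m → ℝ | eval (Fin.snoc y t) g ≤ 1}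
      = ∫⁻ t : ℝ, ∫⁻ z : Fin m → ℝ,
          Set.indicator A (fun p => ENNReal.ofReal (|p.1| ^ m)) (t, z) := by
        refine lintegral_congr_ae (hae.mono fun t ht => ?_)
        show volume {y : Fin m → ℝ | eval (Fin.snoc y t) g ≤ 1} = _
        rw [step2 t ht]
        have hBm : MeasurableSet
            {z : Fin m → ℝ | t ^ d * eval (Fin.snoc z 1 : Fin (m+1) → ℝ) g ≤ 1} :=
          measurableSet_le ((continuous_const.mul hgt)).measurable measurable_const
        rw [← lintegral_indicator_one hBm, ← lintegral_const_mul' _ _ ENNReal.ofReal_ne_top]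
        refine lintegral_congr fun z => ?_
        by_cases h : t ^ d * eval (Fin.snoc z 1 : Fin (m+1) → ℝ) g ≤ 1 <;>
          simp [Set.indicator_apply, h, hA]
    _ = ∫⁻ z : Fin m → ℝ, ∫⁻ t : ℝ,
          Set.indicator A (fun p => ENNReal.ofReal (|p.1| ^ m)) (t, z) := by
        refine lintegral_lintegral_swap ?_
        exact (Measurable.indicator
          ((continuous_abs.pow m).measurable.comp measurable_fst).ennreal_ofReal hAm).aemeasurable
    _ = ∫⁻ z : Fin m → ℝ, (2 / (m + 1) : ENNReal) *
          ENNReal.ofReal (eval (Fin.snoc z 1 : Fin (m+1) → ℝ) g) ^ (-((m : ℝ) + 1) / d) := by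
        refine lintegral_congr fun z => ?_
        rw [← aux_1d m d hd hde _ (hnn _)]
        refine lintegral_congr fun t => ?_
        by_cases h : t ^ d * eval (Fin.snoc z 1 : Fin (m+1) → ℝ) g ≤ 1 <;>
          simp [Set.indicator_apply, h, hA]
    _ = (2 / (m + 1) : ENNReal) * ∫⁻ z : Fin m → ℝ,
          ENNReal.ofReal (eval (Fin.snoc z 1 : Fin (m+1) → ℝ) g) ^ (-((m : ℝ) + 1) / d) := by
        refine lintegral_const_mul' _ _ ?_
        exact (ENNReal.div_lt_top (by norm_num) (by simp)).ne
end

section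
/- Let g be a non-negative form of even degree d on ℝⁿ and let x ∈ S^{n-1} be a zero of g such that the Hessian of g at x is positive definite on the orthogonal complement of x. Then x is an isolated zero of the restriction of g to the unit sphere S^{n-1}. -/
/-!
Write a point `y ≠ x` of the unit sphere as `y = x + r • v` with `v` a unit vector and
`r = |y - x|`; comparing `|y|² = |x|² = 1` gives `⟨v, x⟩ = -r / 2`. Since `g ≥ 0` vanishes at `x`,
the polynomial `t ↦ g (x + t • v)` has no constant and no linear term, and its quadratic
coefficient is half the Hessian form `q v`. Its higher coefficients are bounded uniformly for `v`
on the compact sphere, so `g y = 0` forces `q v ≤ 2 C r`. Thus both `q v` and `|⟨v, x⟩|` are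
`O(r)`, whereas `max (q v) |⟨v, x⟩|` is positive on the sphere by the Hessian hypothesis, hence
bounded below by some `μ > 0`.
-/

open MvPolynomial

namespace Polynomial

theorem coeff_one_eq_zero_of_isLocalMin {p : ℝ[X]} (h : IsLocalMin (fun t => p.eval t) 0) :
    p.coeff 1 = 0 := by
  simpa [Polynomial.deriv, ← coeff_zero_eq_eval_zero, coeff_derivative] using h.deriv_eq_zero

theorem abs_eval_sub_sum_range_le {p : ℝ[X]} {D : ℕ} (k : ℕ) {M t : ℝ} (hD : p.natDegree < D)
    (hM : ∀ m, |p.coeff m| ≤ M) (ht₀ : 0 ≤ t) (ht₁ : t ≤ 1) :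
    |p.eval t - ∑ m ∈ Finset.range k, p.coeff m * t ^ m| ≤ D * M * t ^ k := by
  have hM₀ : 0 ≤ M := (abs_nonneg _).trans (hM 0)
  rw [eval_eq_sum_range' (hD.trans_le (le_max_left D k)),
    ← Finset.sum_range_add_sum_Ico _ (le_max_right D k), add_sub_cancel_left]
  calc |∑ m ∈ Finset.Ico k (max D k), p.coeff m * t ^ m|
      ≤ ∑ m ∈ Finset.Ico k (max D k), M * t ^ k := by
        refine (Finset.abs_sum_le_sum_abs _ _).trans (Finset.sum_le_sum fun m hm => ?_)
        rw [abs_mul, abs_of_nonneg (pow_nonneg ht₀ m)]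
        exact mul_le_mul (hM m) (pow_le_pow_of_le_one ht₀ ht₁ (Finset.mem_Ico.mp hm).1)
          (pow_nonneg ht₀ m) hM₀
    _ ≤ D * M * t ^ k := by
        rw [Finset.sum_const, Nat.card_Ico, nsmul_eq_mul, mul_assoc]
        gcongr
        omega

end Polynomial

namespace MvPolynomial

section CommRing

variable {R σ : Type*} [CommRing R]

noncomputable def restrictToLine (x w : σ → R) (f : MvPolynomial σ R) : Polynomial R :=
  aeval (fun i => Polynomial.C (x i) + Polynomial.C (w i) * Polynomial.X) f

theorem eval_restrictToLine (x w : σ → R) (f : MvPolynomial σ R) (t : R) :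
    (restrictToLine x w f).eval t = eval (x + t • w) f := by
  rw [restrictToLine, ← Polynomial.coe_aeval_eq_eval, ← AlgHom.comp_apply, comp_aeval,
    ← aeval_eq_eval]
  congr 2
  ext i
  simp only [Polynomial.coe_aeval_eq_eval, Polynomial.eval_add, Polynomial.eval_mul,
    Polynomial.eval_C, Polynomial.eval_X, Pi.add_apply, Pi.smul_apply, smul_eq_mul]
  ring

theorem coeff_zero_restrictToLine (x w : σ → R) (f : MvPolynomial σ R) :
    (restrictToLine x w f).coeff 0 = eval x f := by
  simp [Polynomial.coeff_zero_eq_eval_zero, eval_restrictToLine]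

theorem map_eval_aeval_eq_restrictToLine (x w : σ → R) (f : MvPolynomial σ R) :
    Polynomial.map (eval w)
      (aeval (fun i => Polynomial.C (C (x i)) + Polynomial.C (X i) * Polynomial.X) f) =
      restrictToLine x w f := by
  induction f using MvPolynomial.induction_on with
  | C a => simp [restrictToLine, Polynomial.map_C, algebraMap_eq]
  | add p q hp hq => simp_all [restrictToLine]
  | mul_X p i hp => simp_all [restrictToLine]

variable [Fintype σ] [DecidableEq σ]

theorem derivative_restrictToLine (x w : σ → R) (f : MvPolynomial σ R) :
    Polynomial.derivative (restrictToLine x w f) =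
      ∑ i, Polynomial.C (w i) * restrictToLine x w (pderiv i f) := by
  induction f using MvPolynomial.induction_on with
  | C a => simp [restrictToLine]
  | add p q hp hq => simp_all [restrictToLine, mul_add, Finset.sum_add_distrib]
  | mul_X p i hp =>
    simp only [restrictToLine] at hp ⊢
    set φ : σ → Polynomial R := fun i => Polynomial.C (x i) + Polynomial.C (w i) * Polynomial.X
    have hφ : Polynomial.derivative (φ i) = Polynomial.C (w i) := by simp [φ]
    simp only [map_mul, aeval_X, Polynomial.derivative_mul, hp, hφ, pderiv_mul, pderiv_X, map_add,
      mul_add, Finset.sum_add_distrib, Finset.sum_mul]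
    simp [Pi.single_apply, mul_comm, mul_left_comm]

noncomputable def hessianForm (f : MvPolynomial σ R) (x w : σ → R) : R :=
  ∑ i, ∑ j, eval x (pderiv i (pderiv j f)) * w i * w j

theorem two_mul_coeff_two_restrictToLine (x w : σ → R) (f : MvPolynomial σ R) :
    2 * (restrictToLine x w f).coeff 2 = hessianForm f x w := by
  calc 2 * (restrictToLine x w f).coeff 2
      = (Polynomial.derivative (Polynomial.derivative (restrictToLine x w f))).coeff 0 := by
        simp only [Polynomial.coeff_derivative]
        norm_num
        ring
    _ = ∑ j, ∑ i, w j * w i * eval x (pderiv i (pderiv j f)) := by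
        simp [derivative_restrictToLine, Finset.mul_sum, Polynomial.finsetSum_coeff,
          coeff_zero_restrictToLine, mul_assoc]
    _ = hessianForm f x w := by
        rw [hessianForm, Finset.sum_comm]
        exact Finset.sum_congr rfl fun i _ => Finset.sum_congr rfl fun j _ => by ring

end CommRing

section Real

variable {σ : Type*}

theorem exists_bound_coeff_restrictToLine (f : MvPolynomial σ ℝ) (x : σ → ℝ) {K : Set (σ → ℝ)}
    (hK : IsCompact K) :
    ∃ D : ℕ, ∃ M, 0 ≤ M ∧ ∀ w ∈ K,
      (restrictToLine x w f).natDegree < D ∧ ∀ m, |(restrictToLine x w f).coeff m| ≤ M := by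
  -- the coefficients of `restrictToLine x w f` are polynomial functions of `w`
  set Φ := aeval (fun i => Polynomial.C (C (x i)) + Polynomial.C (X i) * Polynomial.X) f
  have hΦ (w : σ → ℝ) : restrictToLine x w f = Φ.map (eval w) :=
    (map_eval_aeval_eq_restrictToLine x w f).symm
  set F := fun w => ∑ m ∈ Finset.range (Φ.natDegree + 1), |eval w (Φ.coeff m)|
  have hFc : Continuous F :=
    continuous_finsetSum _ fun m _ => (MvPolynomial.continuous_eval _).abs
  obtain ⟨M, hM⟩ := hK.exists_bound_of_continuousOn hFc.continuousOn
  have hF (w : σ → ℝ) (hw : w ∈ K) : F w ≤ max M 0 :=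
    (Real.le_norm_self _).trans ((hM w hw).trans (le_max_left M 0))
  refine ⟨Φ.natDegree + 1, max M 0, le_max_right M 0, fun w hw => ⟨?_, fun m => ?_⟩⟩
  · rw [hΦ]
    exact Nat.lt_succ_of_le Polynomial.natDegree_map_le
  · rw [hΦ, Polynomial.coeff_map]
    by_cases hm : m ≤ Φ.natDegree
    · exact (Finset.single_le_sum (f := fun m => |eval w (Φ.coeff m)|)
        (fun m _ => abs_nonneg _) (Finset.mem_range.2 (Nat.lt_succ_of_le hm))).trans (hF w hw)
    · rw [Polynomial.coeff_eq_zero_of_natDegree_lt (not_le.1 hm), map_zero, abs_zero]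
      exact le_max_right M 0

theorem exists_abs_eval_restrictToLine_sub_le (f : MvPolynomial σ ℝ) (x : σ → ℝ)
    {K : Set (σ → ℝ)} (hK : IsCompact K) (k : ℕ) :
    ∃ C, 0 ≤ C ∧ ∀ w ∈ K, ∀ t, 0 ≤ t → t ≤ 1 →
      |(restrictToLine x w f).eval t -
          ∑ m ∈ Finset.range k, (restrictToLine x w f).coeff m * t ^ m| ≤ C * t ^ k := by
  obtain ⟨D, M, hM, hbound⟩ := exists_bound_coeff_restrictToLine f x hK
  exact ⟨D * M, by positivity, fun w hw t ht₀ ht₁ =>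
    Polynomial.abs_eval_sub_sum_range_le k (hbound w hw).1 (hbound w hw).2 ht₀ ht₁⟩

variable [Fintype σ] [DecidableEq σ]

theorem exists_abs_eval_add_smul_sub_hessianForm_le {f : MvPolynomial σ ℝ} {x : σ → ℝ}
    (hf : ∀ y, 0 ≤ eval y f) (hfx : eval x f = 0) {K : Set (σ → ℝ)} (hK : IsCompact K) :
    ∃ C, 0 ≤ C ∧ ∀ w ∈ K, ∀ t, 0 ≤ t → t ≤ 1 →
      |eval (x + t • w) f - t ^ 2 / 2 * hessianForm f x w| ≤ C * t ^ 3 := by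
  obtain ⟨C, hC, hTaylor⟩ := exists_abs_eval_restrictToLine_sub_le f x hK 3
  refine ⟨C, hC, fun w hw t ht₀ ht₁ => ?_⟩
  have h₀ : (restrictToLine x w f).coeff 0 = 0 := by rw [coeff_zero_restrictToLine, hfx]
  have h₁ : (restrictToLine x w f).coeff 1 = 0 :=
    Polynomial.coeff_one_eq_zero_of_isLocalMin <| Filter.Eventually.of_forall fun s => by
      simpa [eval_restrictToLine, hfx] using hf (x + s • w)
  have h₂ := two_mul_coeff_two_restrictToLine x w f
  convert hTaylor w hw t ht₀ ht₁ using 3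
  · rw [eval_restrictToLine]
  · simp only [Finset.sum_range_succ, Finset.sum_range_zero, h₀, h₁, ← h₂]
    ring

end Real

end MvPolynomial

section UnitSphere

variable {σ : Type*} [Fintype σ]

theorem isCompact_setOf_sum_sq_eq_one : IsCompact {w : σ → ℝ | ∑ i, w i ^ 2 = 1} := by
  refine Metric.isCompact_of_isClosed_isBounded (isClosed_eq (by fun_prop) continuous_const)
    ((Metric.isBounded_iff_subset_closedBall 0).2 ⟨1, fun w hw => ?_⟩)
  rw [Metric.mem_closedBall, dist_zero_right, pi_norm_le_iff_of_nonneg zero_le_one]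
  intro i
  rw [Real.norm_eq_abs, ← sq_le_one_iff_abs_le_one, ← hw.out]
  exact Finset.single_le_sum (f := fun j => w j ^ 2) (fun j _ => sq_nonneg _) (Finset.mem_univ i)

theorem exists_sum_sq_eq_one_eq_add_smul {x y : σ → ℝ} (hx : ∑ i, x i ^ 2 = 1)
    (hy : ∑ i, y i ^ 2 = 1) (hne : y ≠ x) :
    0 < √(∑ i, (y i - x i) ^ 2) ∧ ∃ v : σ → ℝ, ∑ i, v i ^ 2 = 1 ∧
      y = x + √(∑ i, (y i - x i) ^ 2) • v ∧ ∑ i, v i * x i = -√(∑ i, (y i - x i) ^ 2) / 2 := by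
  set r := √(∑ i, (y i - x i) ^ 2)
  have hr2 : r ^ 2 = ∑ i, (y i - x i) ^ 2 := Real.sq_sqrt (by positivity)
  have hr : r ≠ 0 := by
    intro h
    refine hne (funext fun i => sub_eq_zero.1 ((pow_eq_zero_iff two_ne_zero).1 ?_))
    exact (Finset.sum_eq_zero_iff_of_nonneg fun j _ => sq_nonneg (y j - x j)).1
      (by rw [← hr2, h]; ring) i (Finset.mem_univ i)
  have hinner : ∑ i, (y i - x i) * x i = -r ^ 2 / 2 := by
    have : ∑ i, (y i - x i) ^ 2 = ∑ i, y i ^ 2 - ∑ i, x i ^ 2 - 2 * ∑ i, (y i - x i) * x i := by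
      rw [Finset.mul_sum, ← Finset.sum_sub_distrib, ← Finset.sum_sub_distrib]
      exact Finset.sum_congr rfl fun i _ => by ring
    rw [hx, hy] at this
    linarith
  refine ⟨(Real.sqrt_nonneg _).lt_of_ne' hr, r⁻¹ • (y - x), ?_, ?_, ?_⟩
  · simp only [Pi.smul_apply, Pi.sub_apply, smul_eq_mul, mul_pow, ← Finset.mul_sum, ← hr2]
    field_simp
  · rw [smul_smul, mul_inv_cancel₀ hr, one_smul, add_sub_cancel]
  · simp only [Pi.smul_apply, Pi.sub_apply, smul_eq_mul, mul_assoc, ← Finset.mul_sum, hinner]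
    field_simp

end UnitSphere

theorem stmt17_general (n : ℕ)
    (g : MvPolynomial (Fin n) ℝ)
    (hnn : ∀ x : Fin n → ℝ, 0 ≤ eval x g)
    (x : Fin n → ℝ) (hx : ∑ i, x i ^ 2 = 1) (hgx : eval x g = 0)
    (hHess : ∀ v : Fin n → ℝ, v ≠ 0 → (∑ i, v i * x i) = 0 →
      0 < ∑ i, ∑ j, eval x (pderiv i (pderiv j g)) * v i * v j) :
    ∃ ε > 0, ∀ y : Fin n → ℝ, ∑ i, y i ^ 2 = 1 → eval y g = 0 →
      Real.sqrt (∑ i, (y i - x i) ^ 2) < ε → y = x := by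
  have hK := isCompact_setOf_sum_sq_eq_one (σ := Fin n)
  obtain ⟨C, hC, hTaylor⟩ := exists_abs_eval_add_smul_sub_hessianForm_le hnn hgx hK
  obtain ⟨μ, hμ, hμK⟩ := hK.exists_forall_le'
    (f := fun w => max (hessianForm g x w) |∑ i, w i * x i|) (a := 0)
    (by unfold hessianForm; fun_prop) fun w hw => by
      by_cases hwx : ∑ i, w i * x i = 0
      · exact lt_max_of_lt_left (hHess w (by rintro rfl; simp at hw) hwx)
      · exact lt_max_of_lt_right (abs_pos.2 hwx)
  refine ⟨min 1 (μ / (2 * C + 1)), by positivity, fun y hy hgy hyx => ?_⟩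
  by_contra hne
  obtain ⟨hr, v, hv, hyv, hvx⟩ := exists_sum_sq_eq_one_eq_add_smul hx hy hne
  set r := √(∑ i, (y i - x i) ^ 2)
  obtain ⟨hr₁, hrμ⟩ := lt_min_iff.1 hyx
  rw [lt_div_iff₀ (by positivity)] at hrμ
  have hq : hessianForm g x v ≤ 2 * C * r := by
    have h := hTaylor v hv r hr.le hr₁.le
    rw [← hyv, hgy, zero_sub, abs_neg] at h
    exact le_of_mul_le_mul_left (((le_abs_self _).trans h).trans_eq (by ring))
      (by positivity : 0 < r ^ 2 / 2)
  refine (hμK v hv).not_gt (max_lt (by linarith) ?_)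
  rw [hvx, abs_div, abs_neg, abs_two, abs_of_pos hr]
  linarith [mul_nonneg hr.le hC]

theorem stmt17 (n d : ℕ) (hn : 2 ≤ n) (hd : 2 ≤ d) (hde : Even d)
    (g : MvPolynomial (Fin n) ℝ) (hg : g.IsHomogeneous d)
    (hnn : ∀ x : Fin n → ℝ, 0 ≤ eval x g)
    (x : Fin n → ℝ) (hx : ∑ i, x i ^ 2 = 1) (hgx : eval x g = 0)
    (hHess : ∀ v : Fin n → ℝ, v ≠ 0 → (∑ i, v i * x i) = 0 →
      0 < ∑ i, ∑ j, eval x (pderiv i (pderiv j g)) * v i * v j) :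
    ∃ ε > 0, ∀ y : Fin n → ℝ, ∑ i, y i ^ 2 = 1 → eval y g = 0 →
      Real.sqrt (∑ i, (y i - x i) ^ 2) < ε → y = x :=
  stmt17_general n g hnn x hx hgx hHess
end
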